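/- arXiv:2502.20649 — 20 statements merged into one kernel-verified Lean document; each statement's English description precedes it below -/
import Mathlib

section
/- For an integer h ≥ 2, let m₀ = 2h(2h−1), m₁ = (2h+1)(2h−1), m₂ = 2h(2h+1), m₃ = 2h(2h+1)+(2h−1), and let Γ_h be the numerical semigroup generated by m₀, m₁, m₂, m₃. Then (2h−1)m₁ − m₀ ∉ Γ_h. -/
/-- Membership in the Bresinsky semigroup Γ_h generated by
m₀ = 2h(2h−1), m₁ = (2h+1)(2h−1), m₂ = 2h(2h+1), m₃ = 2h(2h+1)+(2h−1). -/
def Bres (h x : ℕ) : Prop :=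
  ∃ a b c d : ℕ, x = a * (2*h*(2*h-1)) + b * ((2*h+1)*(2*h-1)) +
    c * (2*h*(2*h+1)) + d * (2*h*(2*h+1)+(2*h-1))

theorem stmt0 (h : ℕ) (hh : 2 ≤ h) :
    ¬ ∃ t : ℕ, (Bres h) t ∧ t + (2*h*(2*h-1)) = (2*h-1) * ((2*h+1)*(2*h-1)) := by
  rintro ⟨t, ⟨a, b, c, d, rfl⟩, heq⟩
  obtain ⟨k, hk1, hk3⟩ : ∃ k, 2*h = k+1 ∧ 3 ≤ k := ⟨2*h-1, by omega, by omega⟩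
  have h1 : 2*h-1 = k := by omega
  have h2 : 2*h+1 = k+2 := by omega
  rw [h1, h2, hk1] at heq
  have hkz : (0:ℤ) < (k:ℤ) := by exact_mod_cast (by omega : 0 < k)
  have hk3' : (3:ℤ) ≤ (k:ℤ) := by exact_mod_cast hk3
  have E : ((a:ℤ)+1)*((k:ℤ)+1)*k + b*((k:ℤ)+2)*k + c*(((k:ℤ)+1)*(k+2))
      + d*(((k:ℤ)+1)*(k+2)+k) = (k:ℤ)*k*(k+2) := by
    have := congrArg (Nat.cast : ℕ → ℤ) heq
    push_cast at this
    linarith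
  have hdvd : (k:ℤ) ∣ 2*((c:ℤ)+d) := by
    refine ⟨(k:ℤ)*k + 2*k - (((a:ℤ)+1)*(k+1) + b*(k+2) + c*(k+3) + d*(k+4)), ?_⟩
    linear_combination E
  have hdn : k ∣ 2*(c+d) := by exact_mod_cast hdvd
  have hcop : Nat.Coprime k 2 := by
    exact Nat.coprime_two_right.mpr (Nat.odd_iff.mpr (by omega))
  obtain ⟨m, hm⟩ : k ∣ c + d := hcop.dvd_of_dvd_mul_left hdn
  rcases Nat.eq_zero_or_pos m with hm0 | hm1
  · rw [hm0, Nat.mul_zero] at hm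
    have hc : c = 0 := by omega
    have hd : d = 0 := by omega
    subst hc hd
    push_cast at E
    have E' : ((a:ℤ)+1)*((k:ℤ)+1) + (b:ℤ)*((k:ℤ)+2) = (k:ℤ)*(k+2) := by
      have h0 : (k:ℤ) * (((a:ℤ)+1)*((k:ℤ)+1) + (b:ℤ)*((k:ℤ)+2))
          = (k:ℤ) * ((k:ℤ)*(k+2)) := by linear_combination E
      exact mul_left_cancel₀ (ne_of_gt hkz) h0
    have hb : ((k:ℤ)+1) ∣ ((b:ℤ)+1) := by
      refine ⟨(k:ℤ)+1 - ((a:ℤ)+1) - b, ?_⟩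
      linear_combination E'
    have hbn : (k+1) ∣ (b+1) := by exact_mod_cast hb
    have hble : k + 1 ≤ b + 1 := Nat.le_of_dvd (by omega) hbn
    have hble' : (k:ℤ) ≤ (b:ℤ) := by exact_mod_cast (by omega : k ≤ b)
    nlinarith [E', Int.natCast_nonneg a]
  · have hcd : k ≤ c + d := by
      calc k = k*1 := by ring
      _ ≤ k*m := Nat.mul_le_mul_left k hm1
      _ = c + d := hm.symm
    have hcd' : (k:ℤ) ≤ (c:ℤ)+d := by exact_mod_cast hcd
    nlinarith [E, Int.natCast_nonneg a, Int.natCast_nonneg b, Int.natCast_nonneg c,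
      Int.natCast_nonneg d]
end

section
/- For an integer h ≥ 2 and the Bresinsky semigroup Γ_h = ⟨m₀, m₁, m₂, m₃⟩ with m₀ = 2h(2h−1), m₁ = (2h+1)(2h−1), m₂ = 2h(2h+1), m₃ = 2h(2h+1)+(2h−1), for every i with 1 ≤ i ≤ 2h−1, the element i·m₁ belongs to the Apéry set Ap(Γ_h, m₀), i.e., i·m₁ ∈ Γ_h and i·m₁ − m₀ ∉ Γ_h. -/
theorem stmt1 (h : ℕ) (hh : 2 ≤ h) (i : ℕ) (hi1 : 1 ≤ i) (hi2 : i ≤ 2*h-1) :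
    Bres h (i * ((2*h+1)*(2*h-1))) ∧ (¬ ∃ t : ℕ, (Bres h) t ∧ t + (2*h*(2*h-1)) = i * ((2*h+1)*(2*h-1))) := by
  constructor
  · exact ⟨0, i, 0, 0, by ring⟩
  · rintro ⟨t, ⟨a, b, c, d, ht⟩, heq⟩
    subst ht
    set p := 2*h - 1 with hpdef
    have hp1 : 2*h = p + 1 := by omega
    have hp2 : 2*h + 1 = p + 2 := by omega
    have hp3 : 3 ≤ p := by omega
    rw [hp1] at heq
    have heq2 : a * ((p+1)*p) + b * ((p+2)*p) + c * ((p+1)*(p+2)) + d * ((p+1)*(p+2)+p) + (p+1)*p = i * ((p+2)*p) := heq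
    by_cases hbd : i ≤ b + d
    · have h1 : i * ((p+2)*p) ≤ (b + d) * ((p+2)*p) := Nat.mul_le_mul_right _ hbd
      have h2 : d * ((p+2)*p) ≤ d * ((p+1)*(p+2)+p) := Nat.mul_le_mul_left _ (by nlinarith)
      have h1' : i * ((p+2)*p) ≤ b * ((p+2)*p) + d * ((p+2)*p) := by
        rw [← add_mul]; exact h1
      have h0 : 0 < (p+1)*p := Nat.mul_pos (by omega) (by omega)
      linarith [heq2, h1', h2, h0, Nat.zero_le (a * ((p+1)*p)), Nat.zero_le (c * ((p+1)*(p+2)))]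
    · push_neg at hbd
      have heqZ : (a:ℤ) * ((p+1)*p) + b * ((p+2)*p) + c * ((p+1)*(p+2)) +
          d * ((p+1)*(p+2)+p) + (p+1)*p = i * ((p+2)*p) := by exact_mod_cast heq2
      have hdvd : ((p:ℤ)+1) ∣ ((i:ℤ) - (b + d)) * p :=
        ⟨(a:ℤ)*p + b*p + (c+d)*(p+2) + p - i*p, by linear_combination -heqZ⟩
      have hcop : IsCoprime ((p:ℤ)+1) (p:ℤ) := by
        simpa [add_comm] using (isCoprime_one_left (x := (p:ℤ))).add_mul_left_left 1
      have hdvd2 : ((p:ℤ)+1) ∣ ((i:ℤ) - (b + d)) := hcop.dvd_of_dvd_mul_right hdvd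
      have hle := Int.le_of_dvd (by push_cast; omega) hdvd2
      omega
end

section
/- For an integer h ≥ 2 and the Bresinsky semigroup Γ_h = ⟨m₀, m₁, m₂, m₃⟩, for every i with 1 ≤ i ≤ 2h−2, the element i·m₂ satisfies i·m₂ − m₀ ∉ Γ_h. -/
theorem stmt2 (h : ℕ) (hh : 2 ≤ h) (i : ℕ) (hi1 : 1 ≤ i) (hi2 : i ≤ 2*h-2) :
    ¬ ∃ t : ℕ, (Bres h) t ∧ t + (2*h*(2*h-1)) = i * (2*h*(2*h+1)) := by
  rintro ⟨t, ⟨a, b, c, d, rfl⟩, heq⟩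
  obtain ⟨k, rfl⟩ : ∃ k, h = k + 2 := ⟨h - 2, by omega⟩
  have hi2' : i ≤ 2*k + 2 := by omega
  simp only [show 2*(k+2) - 1 = 2*k+3 from by omega,
    show 2*(k+2) = 2*k+4 from by ring,
    show 2*k+4+1 = 2*k+5 from by omega,
    show 2*k+4-1 = 2*k+3 from by omega] at heq
  -- heq : a * ((2*k+4)*(2*k+3)) + b * ((2*k+5)*(2*k+3)) + c * ((2*k+4)*(2*k+5))
  --   + d * ((2*k+4)*(2*k+5)+(2*k+3)) + (2*k+4)*(2*k+3) = i * ((2*k+4)*(2*k+5))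
  have heqZ : (a:ℤ)*((2*k+4)*(2*k+3)) + b*((2*k+5)*(2*k+3)) + c*((2*k+4)*(2*k+5))
      + d*((2*k+4)*(2*k+5)+(2*k+3)) + (2*k+4)*(2*k+3) = i*((2*k+4)*(2*k+5)) := by
    exact_mod_cast heq
  rcases Nat.eq_zero_or_pos (b + d) with hbd0 | hbd1
  · obtain ⟨hb, hd⟩ : b = 0 ∧ d = 0 := by omega
    subst hb; subst hd
    have dvd1 : ((2*k+5 : ℕ) : ℤ) ∣ ((2*(a+1) : ℕ) : ℤ) := by
      refine ⟨(i:ℤ)*(2*k+4) - a*(2*k+2) - c*(2*k+4) - (2*k+2), ?_⟩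
      push_cast
      linear_combination heqZ
    have dvd1' : (2*k+5) ∣ 2*(a+1) := Int.ofNat_dvd.mp dvd1
    have cop : Nat.Coprime 2 (2*k+5) :=
      (Nat.Prime.coprime_iff_not_dvd Nat.prime_two).mpr (by omega)
    have dvd2 : (2*k+5) ∣ (a+1) := (Nat.Coprime.dvd_of_dvd_mul_left cop.symm dvd1')
    have ha : 2*k+5 ≤ a+1 := Nat.le_of_dvd (by omega) dvd2
    simp only [Nat.zero_mul, Nat.add_zero] at heq
    have e1 : (2*k+5)*((2*k+4)*(2*k+3)) ≤ (2*k+2)*((2*k+4)*(2*k+5)) := by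
      calc (2*k+5)*((2*k+4)*(2*k+3)) ≤ (a+1)*((2*k+4)*(2*k+3)) :=
            Nat.mul_le_mul_right _ ha
        _ = a*((2*k+4)*(2*k+3)) + (2*k+4)*(2*k+3) := by ring
        _ ≤ i*((2*k+4)*(2*k+5)) := by
            linarith [heq, Nat.zero_le (c*((2*k+4)*(2*k+5)))]
        _ ≤ (2*k+2)*((2*k+4)*(2*k+5)) := Nat.mul_le_mul_right _ hi2'
    nlinarith [e1]
  · have dvd1 : ((2*k+4 : ℕ) : ℤ) ∣ (((2*k+3)*(b+d) : ℕ) : ℤ) := by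
      refine ⟨(i:ℤ)*(2*k+5) - a*(2*k+3) - b*(2*k+3) - c*(2*k+5) - d*(2*k+5) - (2*k+3), ?_⟩
      push_cast
      linear_combination heqZ
    have dvd1' : (2*k+4) ∣ (2*k+3)*(b+d) := Int.ofNat_dvd.mp dvd1
    have cop : Nat.Coprime (2*k+4) (2*k+3) := by
      have h14 : 2*k+4 = 1 + (2*k+3) := by omega
      rw [h14]
      exact (Nat.coprime_add_self_left).mpr (Nat.coprime_one_left _)
    have dvd2 : (2*k+4) ∣ (b+d) := cop.dvd_of_dvd_mul_left dvd1'
    have hbd : 2*k+4 ≤ b+d := Nat.le_of_dvd hbd1 dvd2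
    have hbdZ : ((2*k+4 : ℕ) : ℤ) ≤ (b:ℤ) + d := by exact_mod_cast hbd
    have hiZ : (i:ℤ) ≤ 2*(k:ℤ)+2 := by exact_mod_cast hi2'
    have t1 : (2*(k:ℤ)+4)*((2*k+5)*(2*k+3)) ≤ ((b:ℤ)+d)*((2*(k:ℤ)+5)*(2*k+3)) := by
      have := mul_le_mul_of_nonneg_right hbdZ
        (show (0:ℤ) ≤ (2*(k:ℤ)+5)*(2*k+3) by positivity)
      push_cast at this ⊢
      linarith
    have t2 : (i:ℤ)*((2*(k:ℤ)+4)*(2*k+5)) ≤ (2*(k:ℤ)+2)*((2*(k:ℤ)+4)*(2*k+5)) :=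
      mul_le_mul_of_nonneg_right hiZ (by positivity)
    have t3 : (d:ℤ)*((2*(k:ℤ)+5)*(2*k+3)) ≤ (d:ℤ)*((2*(k:ℤ)+4)*(2*k+5)+(2*k+3)) := by
      have hd0 : (0:ℤ) ≤ (d:ℤ) := Int.natCast_nonneg d
      nlinarith [Int.natCast_nonneg k, sq_nonneg ((k:ℤ))]
    have t4 : (0:ℤ) ≤ (a:ℤ)*((2*(k:ℤ)+4)*(2*k+3)) := by positivity
    have t5 : (0:ℤ) ≤ (c:ℤ)*((2*(k:ℤ)+4)*(2*k+5)) := by positivity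
    linarith [heqZ, t1, t2, t3, t4, t5, sq_nonneg ((k:ℤ)), Int.natCast_nonneg k]
end

section
/- For an integer h ≥ 2 and the Bresinsky semigroup Γ_h = ⟨m₀, m₁, m₂, m₃⟩, for every i with 1 ≤ i ≤ 2h−2, the element i·m₃ satisfies i·m₃ − m₀ ∉ Γ_h. -/
lemma bres_key (N A b c d i : ℤ) (hN : 4 ≤ N) (hpar : Even N)
    (hA : 1 ≤ A) (hb : 0 ≤ b) (hc : 0 ≤ c) (hd : 0 ≤ d)
    (hi1 : 1 ≤ i) (hi2 : i ≤ N - 2)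
    (hE : A*(N*(N-1)) + b*((N+1)*(N-1)) + c*(N*(N+1)) + d*(N*(N+1)+(N-1))
        = i*(N*(N+1)+(N-1))) : False := by
  -- size bound : A + b + c + d ≤ i + 2
  have hS : A + b + c + d ≤ i + 2 := by
    by_contra hcon
    push_neg at hcon
    nlinarith [mul_nonneg hb (by linarith : (0:ℤ) ≤ N - 1),
      mul_nonneg hc (by linarith : (0:ℤ) ≤ N),
      mul_nonneg hd (by linarith : (0:ℤ) ≤ 3*N - 1),
      mul_le_mul_of_nonneg_right (by linarith : i + 3 ≤ A + b + c + d)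
        (by nlinarith : (0:ℤ) ≤ N * (N - 1))]
  -- mod N : b + d = i
  have hz1 : b + d = i := by
    have hk1 : i - b - d
        = N * (i*N + 2*i - A*(N-1) - c*(N+1) - b*N - d*N - 2*d) := by
      linear_combination hE
    set K : ℤ := i*N + 2*i - A*(N-1) - c*(N+1) - b*N - d*N - 2*d with hK
    have hub : i - b - d ≤ N - 2 := by linarith
    have hlb : -(1:ℤ) ≤ i - b - d := by linarith
    have h0 : K = 0 := by
      rcases le_or_gt K (-1) with hKle | hKgt
      · nlinarith [mul_le_mul_of_nonneg_left hKle (by linarith : (0:ℤ) ≤ N)]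
      rcases le_or_gt 1 K with hKge | hKlt
      · nlinarith [mul_le_mul_of_nonneg_left hKge (by linarith : (0:ℤ) ≤ N)]
      omega
    rw [h0, mul_zero] at hk1
    linarith
  -- mod (N-1) : c + d = i
  have hz2 : c + d = i := by
    have hk2 : 2*(c + d - i)
        = (N-1) * (i*(N+3) - A*N - b*(N+1) - c*(N+2) - d*(N+3)) := by
      linear_combination hE
    set K : ℤ := i*(N+3) - A*N - b*(N+1) - c*(N+2) - d*(N+3) with hK
    have hub : 2*(c + d - i) ≤ 2 := by linarith
    have hlb : -2*N + 4 ≤ 2*(c + d - i) := by linarith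
    have h0 : K = 0 := by
      rcases le_or_gt K (-2) with hKle | hKgt
      · nlinarith [mul_le_mul_of_nonneg_left hKle (by linarith : (0:ℤ) ≤ N - 1)]
      rcases le_or_gt 1 K with hKge | hKlt
      · nlinarith [mul_le_mul_of_nonneg_left hKge (by linarith : (0:ℤ) ≤ N - 1)]
      -- K ∈ {-1, 0}; rule out -1 by parity
      rcases hpar with ⟨m, hm⟩
      interval_cases K
      · exfalso; omega
      · rfl
    rw [h0, mul_zero] at hk2
    linarith
  -- final contradiction
  have hfin : (A + i - d) * (N * (N-1)) = 0 := by
    linear_combination hE - (N^2 - 1) * hz1 - (N^2 + N) * hz2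
  rcases mul_eq_zero.mp hfin with h1 | h1
  · linarith
  · nlinarith

theorem stmt3 (h : ℕ) (hh : 2 ≤ h) (i : ℕ) (hi1 : 1 ≤ i) (hi2 : i ≤ 2*h-2) :
    ¬ ∃ t : ℕ, (Bres h) t ∧ t + (2*h*(2*h-1)) = i * (2*h*(2*h+1)+(2*h-1)) := by
  rintro ⟨t, ⟨a, b, c, d, ht⟩, heq⟩
  subst ht
  have h1 : (1:ℕ) ≤ 2*h := by omega
  zify [h1] at heq
  refine bres_key (2*(h:ℤ)) ((a:ℤ)+1) b c d i ?_ ?_ ?_ ?_ ?_ ?_ ?_ ?_ ?_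
  · have : (2:ℤ) ≤ h := by exact_mod_cast hh
    linarith
  · exact ⟨h, by ring⟩
  · linarith [Int.natCast_nonneg a]
  · positivity
  · positivity
  · positivity
  · exact_mod_cast hi1
  · have h2 : (i:ℕ) + 2 ≤ 2*h := by omega
    have h3 : (i:ℤ) + 2 ≤ 2*(h:ℤ) := by exact_mod_cast h2
    linarith
  · linear_combination heq
end

section
/- For an integer h ≥ 2 and the Bresinsky semigroup Γ_h = ⟨m₀, m₁, m₂, m₃⟩, for all i, j with 1 ≤ i ≤ 2h−2 and 1 ≤ j ≤ (2h−1)−i, the element i·m₁ + j·m₃ satisfies i·m₁ + j·m₃ − m₀ ∉ Γ_h. -/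
set_option maxHeartbeats 1000000


theorem stmt4 (h : ℕ) (hh : 2 ≤ h) (i j : ℕ) (hi1 : 1 ≤ i) (hi2 : i ≤ 2*h-2)
    (hj1 : 1 ≤ j) (hj2 : j ≤ (2*h-1) - i) :
    ¬ ∃ t : ℕ, (Bres h) t ∧ t + (2*h*(2*h-1)) = i * ((2*h+1)*(2*h-1)) + j * (2*h*(2*h+1)+(2*h-1)) := by
  obtain ⟨m, rfl⟩ : ∃ m, h = m + 2 := ⟨h - 2, by omega⟩
  rintro ⟨t, ⟨a, b, c, d, rfl⟩, heq⟩
  have e1 : 2*(m+2)-1 = 2*m+3 := by omega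
  rw [e1] at heq
  have hij : i + j ≤ 2*m+3 := by omega
  -- cast the main equation to ℤ
  have EZ : (a:ℤ)*((2*m+4)*(2*m+3)) + (b:ℤ)*((2*m+5)*(2*m+3)) +
      (c:ℤ)*((2*m+4)*(2*m+5)) + (d:ℤ)*((2*m+4)*(2*m+5)+(2*m+3)) +
      ((2*m+4)*(2*m+3)) =
      (i:ℤ)*((2*m+5)*(2*m+3)) + (j:ℤ)*((2*m+4)*(2*m+5)+(2*m+3)) := by
    have := congrArg (Nat.cast : ℕ → ℤ) heq
    push_cast at this
    linear_combination this
  have ha0 : (0:ℤ) ≤ (a:ℤ) := Int.natCast_nonneg a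
  have hb0 : (0:ℤ) ≤ (b:ℤ) := Int.natCast_nonneg b
  have hc0 : (0:ℤ) ≤ (c:ℤ) := Int.natCast_nonneg c
  have hd0 : (0:ℤ) ≤ (d:ℤ) := Int.natCast_nonneg d
  have hi0 : (1:ℤ) ≤ (i:ℤ) := by exact_mod_cast hi1
  have hj0 : (1:ℤ) ≤ (j:ℤ) := by exact_mod_cast hj1
  have hijZ : (i:ℤ) + (j:ℤ) ≤ 2*m+3 := by exact_mod_cast hij
  -- size bound: b + d ≤ 2m+5
  have hbd_ub : (b:ℤ) + d ≤ 2*m+5 := by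
    by_contra hcon
    push_neg at hcon
    have h6 : (2*(m:ℤ)+6) ≤ (b:ℤ) + d := by omega
    nlinarith [mul_nonneg hd0 (by positivity : (0:ℤ) ≤ (2*(m:ℤ)+4)),
      mul_nonneg (by linarith : (0:ℤ) ≤ (2*(m:ℤ)+3) - ((i:ℤ)+j))
        (by positivity : (0:ℤ) ≤ (2*(m:ℤ)+4)*(2*m+5)+(2*m+3)),
      mul_nonneg (by linarith : (0:ℤ) ≤ (b:ℤ) + d - (2*m+6))
        (by positivity : (0:ℤ) ≤ (2*(m:ℤ)+5)*(2*m+3)),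
      mul_nonneg (by linarith : (0:ℤ) ≤ (i:ℤ)) (by positivity : (0:ℤ) ≤ (2*(m:ℤ)+4)),
      mul_nonneg ha0 (by positivity : (0:ℤ) ≤ (2*(m:ℤ)+4)*(2*m+3)),
      mul_nonneg hc0 (by positivity : (0:ℤ) ≤ (2*(m:ℤ)+4)*(2*m+5))]
  -- size bound: c + d ≤ 2m+3
  have hcd_ub : (c:ℤ) + d ≤ 2*m+3 := by
    by_contra hcon
    push_neg at hcon
    have h6 : (2*(m:ℤ)+4) ≤ (c:ℤ) + d := by omega
    nlinarith [mul_nonneg hd0 (by positivity : (0:ℤ) ≤ (2*(m:ℤ)+3)),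
      mul_nonneg (by linarith : (0:ℤ) ≤ (2*(m:ℤ)+3) - ((i:ℤ)+j))
        (by positivity : (0:ℤ) ≤ (2*(m:ℤ)+4)*(2*m+5)+(2*m+3)),
      mul_nonneg (by linarith : (0:ℤ) ≤ (c:ℤ) + d - (2*m+4))
        (by positivity : (0:ℤ) ≤ (2*(m:ℤ)+4)*(2*m+5)),
      mul_nonneg ha0 (by positivity : (0:ℤ) ≤ (2*(m:ℤ)+4)*(2*m+3)),
      mul_nonneg hb0 (by positivity : (0:ℤ) ≤ (2*(m:ℤ)+5)*(2*m+3))]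
  -- congruence mod 2h = 2m+4
  have hd1 : (2*(m:ℤ)+4) ∣ ((i:ℤ)+j) - ((b:ℤ)+d) :=
    ⟨(2*m+4)*((i:ℤ)-b) + (2*m+6)*((j:ℤ)-d) - (2*m+3)*a - (2*m+5)*c - (2*m+3),
      by linear_combination EZ⟩
  -- congruence mod 2h-1 = 2m+3
  have hd2 : (2*(m:ℤ)+3) ∣ ((c:ℤ)+d) - (j:ℤ) :=
    ⟨-((m:ℤ)+2)*(2*m+4)*a - ((m:ℤ)+2)*(2*m+5)*b - (2*(m:ℤ)^2+10*m+13)*c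
      - (2*(m:ℤ)+5)*((m:ℤ)+3)*d - ((m:ℤ)+2)*(2*m+4) + ((m:ℤ)+2)*(2*m+5)*i
      + (2*(m:ℤ)+5)*((m:ℤ)+3)*j,
      by linear_combination ((m:ℤ)+2) * EZ⟩
  have heq1 : (b:ℤ) + d = (i:ℤ) + j := by
    have h0 : ((i:ℤ)+j) - ((b:ℤ)+d) = 0 := by
      refine Int.eq_zero_of_abs_lt_dvd hd1 ?_
      rw [abs_lt]
      constructor <;> linarith
    linear_combination -h0
  have heq2 : (c:ℤ) + d = (j:ℤ) := by
    have h0 : ((c:ℤ)+d) - (j:ℤ) = 0 := by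
      refine Int.eq_zero_of_abs_lt_dvd hd2 ?_
      rw [abs_lt]
      constructor <;> linarith
    linear_combination h0
  -- final contradiction: (a + c + 1) * m₀ = 0
  have hfin : ((a:ℤ) + c + 1) * ((2*m+4)*(2*m+3)) = 0 := by
    linear_combination EZ + (-(2*(m:ℤ)+5)*(2*m+3)) * heq1 + (-(4*(m:ℤ)+8)) * heq2
  have hpos : (0:ℤ) < ((a:ℤ) + c + 1) * ((2*m+4)*(2*m+3)) := by positivity
  exact hpos.ne' hfin
end

section
/- For an integer h ≥ 2 and the Bresinsky semigroup Γ_h = ⟨m₀, m₁, m₂, m₃⟩, for all i, j with 1 ≤ i ≤ 2h−3 and 1 ≤ j ≤ (2h−2)−i, the element i·m₂ + j·m₃ satisfies i·m₂ + j·m₃ − m₀ ∉ Γ_h. -/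
set_option maxHeartbeats 800000 in
theorem stmt5 (h : ℕ) (hh : 2 ≤ h) (i j : ℕ) (hi1 : 1 ≤ i) (hi2 : i ≤ 2*h-3)
    (hj1 : 1 ≤ j) (hj2 : j ≤ (2*h-2) - i) :
    ¬ ∃ t : ℕ, (Bres h) t ∧ t + (2*h*(2*h-1)) = i * (2*h*(2*h+1)) + j * (2*h*(2*h+1)+(2*h-1)) := by
  rintro ⟨t, ⟨a, b, c, d, ht⟩, heq⟩
  subst ht
  set N := 2*h - 1 with hNdef
  have h1 : 2*h = N + 1 := by omega
  have hN3 : 3 ≤ N := by omega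
  have hij : i + j + 1 ≤ N := by omega
  rw [h1] at heq
  -- rearranged key equation
  have key : N*(a*(N+1)+b*(N+2)+c*(N+3)+d*(N+4)+(N+1)) + 2*(c+d)
      = N*(i*(N+3)+j*(N+4)) + 2*(i+j) := by
    calc N*(a*(N+1)+b*(N+2)+c*(N+3)+d*(N+4)+(N+1)) + 2*(c+d)
        = a * ((N+1)*N) + b * ((N+1+1)*N) + c * ((N+1)*(N+1+1)) +
          d * ((N+1)*(N+1+1)+N) + (N+1)*N := by ring
      _ = i * ((N+1)*(N+1+1)) + j * ((N+1)*(N+1+1)+N) := heq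
      _ = N*(i*(N+3)+j*(N+4)) + 2*(i+j) := by ring
  -- Step 1: c + d < i + j + N
  have hcd_lt : c + d < i + j + N := by
    by_contra hc
    push_neg at hc
    have hA : (c+d)*(N+3) ≤ a*(N+1)+b*(N+2)+c*(N+3)+d*(N+4)+(N+1) := by
      have h1 : d*(N+3) ≤ d*(N+4) := Nat.mul_le_mul le_rfl (by omega)
      have h2 : (c+d)*(N+3) = c*(N+3) + d*(N+3) := by ring
      linarith only [h1, h2, Nat.zero_le (a*(N+1)), Nat.zero_le (b*(N+2)), Nat.zero_le N]
    have hB : i*(N+3)+j*(N+4) ≤ (i+j)*(N+3) + N := by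
      have e : i*(N+3)+j*(N+4) = (i+j)*(N+3) + j := by ring
      linarith only [e, hij]
    have hNAB : N*(a*(N+1)+b*(N+2)+c*(N+3)+d*(N+4)+(N+1)) ≤ N*(i*(N+3)+j*(N+4)) := by
      linarith only [key, hc]
    have hAB2 : a*(N+1)+b*(N+2)+c*(N+3)+d*(N+4)+(N+1) ≤ i*(N+3)+j*(N+4) :=
      Nat.le_of_mul_le_mul_left hNAB (by omega)
    have hc' : (i+j+N)*(N+3) ≤ (c+d)*(N+3) := Nat.mul_le_mul_right _ hc
    have hexp : (i+j+N)*(N+3) = (i+j)*(N+3) + N*(N+3) := by ring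
    have hbig : N < N*(N+3) := lt_mul_of_one_lt_right (by omega) (by omega)
    linarith only [hc', hexp, hbig, hA, hAB2, hB]
  -- Step 2: c + d ≡ i + j (mod N), hence c + d = i + j
  have hmod : (2*(c+d)) % N = (2*(i+j)) % N := by
    have h2 := congrArg (· % N) key
    simpa [Nat.mul_add_mod] using h2
  have hcop : Nat.Coprime 2 N := by
    have : Odd N := ⟨h - 1, by omega⟩
    exact Nat.coprime_two_left.mpr this
  have hmod2 : (c+d) % N = (i+j) % N :=
    Nat.ModEq.cancel_left_of_coprime hcop.symm hmod
  have hcd : c + d = i + j := by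
    have e1 : (i+j) % N = i+j := Nat.mod_eq_of_lt (by omega)
    rcases Nat.lt_or_ge (c+d) N with hlt | hge
    · rw [Nat.mod_eq_of_lt hlt, e1] at hmod2; exact hmod2
    · exfalso
      have h2 : (c+d) % N = (c+d) - N := by
        rw [Nat.mod_eq_sub_mod hge, Nat.mod_eq_of_lt (by omega)]
      omega
  -- Step 3: final contradiction
  rw [hcd] at key
  have hNA : N * (a*(N+1)+b*(N+2)+c*(N+3)+d*(N+4)+(N+1)) = N * (i*(N+3)+j*(N+4)) := by
    linarith
  have hAB : a*(N+1)+b*(N+2)+c*(N+3)+d*(N+4)+(N+1) = i*(N+3)+j*(N+4) :=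
    Nat.eq_of_mul_eq_mul_left (by omega) hNA
  have LA : a*(N+1)+b*(N+2)+c*(N+3)+d*(N+4)+(N+1)
      = (a+b+c+d+1)*N + (a+2*b+3*c+4*d+1) := by ring
  have LB : i*(N+3)+j*(N+4) = (i+j)*N + (3*i+4*j) := by ring
  rw [LA, LB] at hAB
  have e2 : (a+b+c+d+1)*N = (i+j)*N + (a+b+1)*N := by rw [← hcd]; ring
  rw [e2] at hAB
  have hP : N ≤ (a+b+1)*N := Nat.le_mul_of_pos_left N (by omega)
  linarith only [hAB, hP, hij, hcd, hi1]
end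

section
/- For an integer h ≥ 2 and the Bresinsky semigroup Γ_h = ⟨m₀, m₁, m₂, m₃⟩, the Apéry set Ap(Γ_h, m₀) equals {0} ∪ A₁ ∪ A₂ ∪ A₃ ∪ A₄ ∪ A₅, where A₁ = {i·m₁ : 1 ≤ i ≤ 2h−1}, A₂ = {i·m₂ : 1 ≤ i ≤ 2h−2}, A₃ = {i·m₃ : 1 ≤ i ≤ 2h−2}, A₄ = {i·m₁ + j·m₃ : 1 ≤ i ≤ 2h−2, 1 ≤ j ≤ (2h−1)−i}, A₅ = {i·m₂ + j·m₃ : 1 ≤ i ≤ 2h−3, 1 ≤ j ≤ (2h−2)−i}. -/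
namespace BresAux

/-- Normal-form value with parameters B = b+d, C = c+d. -/
def V (k B C : ℕ) : ℕ :=
  (max B C) * ((2*k+4)*(2*k+3)) + B*(2*k+3) + C*(4*k+8)

lemma V00 (k : ℕ) : V k 0 0 = 0 := by simp [V]

lemma VC0 (k B : ℕ) : V k B 0 = B * ((2*k+5)*(2*k+3)) := by
  rw [V, Nat.max_eq_left (Nat.zero_le _)]; ring

lemma VB0 (k C : ℕ) : V k 0 C = C * ((2*k+4)*(2*k+5)) := by
  rw [V, Nat.max_eq_right (Nat.zero_le _)]; ring

lemma Vsplit1 (k i C : ℕ) :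
    V k (i+C) C = i * ((2*k+5)*(2*k+3)) + C * ((2*k+4)*(2*k+5)+(2*k+3)) := by
  rw [V, Nat.max_eq_left (by omega)]; ring

lemma Vsplit2 (k j B : ℕ) :
    V k B (j+B) = j * ((2*k+4)*(2*k+5)) + B * ((2*k+4)*(2*k+5)+(2*k+3)) := by
  rw [V, Nat.max_eq_right (by omega)]; ring

lemma VBB (k B : ℕ) : V k B B = B * ((2*k+4)*(2*k+5)+(2*k+3)) := by
  rw [V, Nat.max_self]; ring

/-- Reduction to normal form, by strong induction on the measure 2(b+c+d)+d. -/
lemma NFcore (k : ℕ) : ∀ N a b c d : ℕ, 2*(b+c+d)+d ≤ N →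
    ∃ K B C, B ≤ 2*k+3 ∧ C ≤ 2*k+2 ∧
      a*((2*k+4)*(2*k+3)) + b*((2*k+5)*(2*k+3)) + c*((2*k+4)*(2*k+5))
        + d*((2*k+4)*(2*k+5)+(2*k+3))
      = K*((2*k+4)*(2*k+3)) + V k B C := by
  intro N
  induction N using Nat.strong_induction_on with
  | _ N IH =>
  intro a b c d hm
  by_cases h1 : 1 ≤ b ∧ 1 ≤ c
  · obtain ⟨b', rfl⟩ : ∃ b', b = b'+1 := ⟨b-1, by omega⟩
    obtain ⟨c', rfl⟩ : ∃ c', c = c'+1 := ⟨c-1, by omega⟩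
    obtain ⟨K,B,C,hB,hC,he⟩ := IH (2*(b'+c'+(d+1))+(d+1)) (by omega) (a+1) b' c' (d+1) le_rfl
    exact ⟨K,B,C,hB,hC, by rw [← he]; ring⟩
  by_cases h2 : 2*k+4 ≤ b
  · obtain ⟨b', rfl⟩ : ∃ b', b = b'+(2*k+4) := ⟨b-(2*k+4), by omega⟩
    obtain ⟨K,B,C,hB,hC,he⟩ := IH (2*(b'+c+d)+d) (by omega) (a+(2*k+5)) b' c d le_rfl
    exact ⟨K,B,C,hB,hC, by rw [← he]; ring⟩
  by_cases h3 : 2*k+3 ≤ c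
  · obtain ⟨c', rfl⟩ : ∃ c', c = c'+(2*k+3) := ⟨c-(2*k+3), by omega⟩
    obtain ⟨K,B,C,hB,hC,he⟩ := IH (2*(b+c'+d)+d) (by omega) (a+(2*k+5)) b c' d le_rfl
    exact ⟨K,B,C,hB,hC, by rw [← he]; ring⟩
  by_cases h4 : 2*k+3 ≤ d
  · obtain ⟨d', rfl⟩ : ∃ d', d = d'+(2*k+3) := ⟨d-(2*k+3), by omega⟩
    obtain ⟨K,B,C,hB,hC,he⟩ := IH (2*((b+(2*k+3))+c+d')+d') (by omega)
      (a+2) (b+(2*k+3)) c d' le_rfl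
    exact ⟨K,B,C,hB,hC, by rw [← he]; ring⟩
  by_cases h5 : 1 ≤ b ∧ 1 ≤ d ∧ 2*k+4 ≤ b + d
  · have hbd0 : b + (2*k+4-b) = 2*k+4 := by omega
    obtain ⟨d', hd⟩ : ∃ d', d = (2*k+4-b) + d' := ⟨d - (2*k+4-b), by omega⟩
    subst hd
    obtain ⟨K,B,C,hB,hC,he⟩ := IH (2*(0+(c+(2*k+4-b))+d')+d') (by omega)
      (a+b+1) 0 (c+(2*k+4-b)) d' le_rfl
    refine ⟨K,B,C,hB,hC, ?_⟩
    rw [← he]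
    have hz : (b:ℤ) + (2*k+4-b : ℕ) = 2*k+4 := by exact_mod_cast hbd0
    zify
    linear_combination (2*k+3:ℤ) * hz
  by_cases h6 : 1 ≤ c ∧ 1 ≤ d ∧ 2*k+3 ≤ c + d
  · have hcd0 : c + (2*k+3-c) = 2*k+3 := by omega
    have hee : (2*k+5-(2*k+3-c)) + (2*k+3-c) = 2*k+5 := by omega
    obtain ⟨d', hd⟩ : ∃ d', d = (2*k+3-c) + d' := ⟨d - (2*k+3-c), by omega⟩
    subst hd
    obtain ⟨K,B,C,hB,hC,he⟩ := IH (2*((b+(2*k+3-c))+0+d')+d') (by omega)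
      (a+(2*k+5-(2*k+3-c))) (b+(2*k+3-c)) 0 d' le_rfl
    refine ⟨K,B,C,hB,hC, ?_⟩
    rw [← he]
    have hz1 : (c:ℤ) + (2*k+3-c : ℕ) = 2*k+3 := by exact_mod_cast hcd0
    have hz2 : ((2*k+5-(2*k+3-c) : ℕ):ℤ) + (2*k+3-c : ℕ) = 2*k+5 := by exact_mod_cast hee
    zify
    linear_combination ((2*k+4)*(2*k+5):ℤ) * hz1 - ((2*k+4)*(2*k+3):ℤ) * hz2
  · push_neg at h1 h5 h6
    refine ⟨a, b+d, c+d, by omega, by omega, ?_⟩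
    rw [V]
    have hbc : b = 0 ∨ c = 0 := by omega
    rcases hbc with rfl | rfl
    · rw [Nat.max_eq_right (by omega)]; ring
    · rw [Nat.max_eq_left (by omega)]; ring

lemma NF (k x : ℕ) (hx : Bres (k+2) x) :
    ∃ K B C, B ≤ 2*k+3 ∧ C ≤ 2*k+2 ∧ x = K*((2*k+4)*(2*k+3)) + V k B C := by
  obtain ⟨a,b,c,d,rfl⟩ := hx
  have e2 : 2*(k+2)-1 = 2*k+3 := by omega
  have key : a * (2*(k+2)*(2*(k+2)-1)) + b * ((2*(k+2)+1)*(2*(k+2)-1)) +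
      c * (2*(k+2)*(2*(k+2)+1)) + d * (2*(k+2)*(2*(k+2)+1)+(2*(k+2)-1))
      = a*((2*k+4)*(2*k+3)) + b*((2*k+5)*(2*k+3)) + c*((2*k+4)*(2*k+5))
        + d*((2*k+4)*(2*k+5)+(2*k+3)) := by
    rw [e2]; ring
  rw [key]
  exact NFcore k (2*(b+c+d)+d) a b c d le_rfl

lemma BresV (k K B C : ℕ) : Bres (k+2) (K*((2*k+4)*(2*k+3)) + V k B C) := by
  have e2 : 2*(k+2)-1 = 2*k+3 := by omega
  rcases le_total C B with hcb | hbc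
  · obtain ⟨i, rfl⟩ : ∃ i, B = i + C := ⟨B - C, by omega⟩
    exact ⟨K, i, 0, C, by rw [Vsplit1, e2]; ring⟩
  · obtain ⟨j, rfl⟩ : ∃ j, C = j + B := ⟨C - B, by omega⟩
    exact ⟨K, 0, j, B, by rw [Vsplit2, e2]; ring⟩

lemma Vinj (k B C B' C' K : ℕ) (hB : B ≤ 2*k+3) (hC : C ≤ 2*k+2)
    (hB' : B' ≤ 2*k+3) (hC' : C' ≤ 2*k+2)
    (he : V k B C = K * ((2*k+4)*(2*k+3)) + V k B' C') : B = B' ∧ C = C' := by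
  rw [V, V] at he
  have hz := congrArg (Nat.cast : ℕ → ℤ) he
  push_cast at hz
  set M : ℤ := (K:ℤ) + max (B':ℤ) C' - max (B:ℤ) C with hM
  have key : ((B:ℤ) - B')*(2*k+3) + ((C:ℤ) - C')*(4*k+8) = M * ((2*k+4)*(2*k+3)) := by
    rw [hM]; linear_combination hz
  have d1 : ((2*k+4:ℤ)) ∣ ((B:ℤ) - B') := by
    have hdm : ((2*k+4:ℤ)) ∣ ((B:ℤ)-B')*(2*k+3) :=
      ⟨((C':ℤ)-C)*2 + M*(2*k+3), by linear_combination key⟩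
    have hdm2 : ((2*k+4:ℤ)) ∣ ((B:ℤ)-B')*(2*k+4) := ⟨(B:ℤ)-B', mul_comm _ _⟩
    have : ((B:ℤ)-B') = ((B:ℤ)-B')*(2*k+4) - ((B:ℤ)-B')*(2*k+3) := by ring
    rw [this]; exact dvd_sub hdm2 hdm
  have d2 : ((2*k+3:ℤ)) ∣ 2*((C:ℤ) - C') := by
    have hdm : ((2*k+3:ℤ)) ∣ ((C:ℤ)-C')*(4*k+8) :=
      ⟨((B':ℤ)-B) + M*(2*k+4), by linear_combination key⟩
    have hdm2 : ((2*k+3:ℤ)) ∣ ((C:ℤ)-C')*(4*k+6) := ⟨((C:ℤ)-C')*2, by ring⟩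
    have : 2*((C:ℤ)-C') = ((C:ℤ)-C')*(4*k+8) - ((C:ℤ)-C')*(4*k+6) := by ring
    rw [this]; exact dvd_sub hdm hdm2
  have d3 : ((2*k+3:ℤ)) ∣ ((C:ℤ) - C') := by
    have hdm : ((2*k+3:ℤ)) ∣ ((2*k+4:ℤ))*((C:ℤ)-C') := by
      have := d2.mul_left ((k:ℤ)+2)
      have e : ((k:ℤ)+2) * (2*((C:ℤ)-C')) = ((2*k+4:ℤ))*((C:ℤ)-C') := by ring
      rwa [e] at this
    have hdm2 : ((2*k+3:ℤ)) ∣ ((2*k+3:ℤ))*((C:ℤ)-C') := ⟨(C:ℤ)-C', rfl⟩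
    have : ((C:ℤ)-C') = ((2*k+4:ℤ))*((C:ℤ)-C') - ((2*k+3:ℤ))*((C:ℤ)-C') := by ring
    rw [this]; exact dvd_sub hdm hdm2
  have hBB : (B:ℤ) - B' = 0 := by
    refine Int.eq_zero_of_abs_lt_dvd d1 ?_
    have h1 : (B:ℤ) ≤ 2*k+3 := by exact_mod_cast hB
    have h2 : (B':ℤ) ≤ 2*k+3 := by exact_mod_cast hB'
    rw [abs_lt]; constructor <;> omega
  have hCC : (C:ℤ) - C' = 0 := by
    refine Int.eq_zero_of_abs_lt_dvd d3 ?_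
    have h1 : (C:ℤ) ≤ 2*k+2 := by exact_mod_cast hC
    have h2 : (C':ℤ) ≤ 2*k+2 := by exact_mod_cast hC'
    rw [abs_lt]; constructor <;> omega
  constructor <;> [skip; skip]
  · have : (B:ℤ) = B' := by omega
    exact_mod_cast this
  · have : (C:ℤ) = C' := by omega
    exact_mod_cast this

/-- V k B C is an Apéry element. -/
lemma apery_mem (k B C : ℕ) (hB : B ≤ 2*k+3) (hC : C ≤ 2*k+2) :
    Bres (k+2) (V k B C) ∧
      ¬ ∃ t, Bres (k+2) t ∧ t + (2*k+4)*(2*k+3) = V k B C := by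
  constructor
  · have := BresV k 0 B C
    simpa using this
  · rintro ⟨t, htB, hte⟩
    obtain ⟨K', B', C', hB', hC', rfl⟩ := NF k t htB
    have heq : V k B C = (K'+1)*((2*k+4)*(2*k+3)) + V k B' C' := by
      calc V k B C = (K'*((2*k+4)*(2*k+3)) + V k B' C') + (2*k+4)*(2*k+3) := hte.symm
        _ = (K'+1)*((2*k+4)*(2*k+3)) + V k B' C' := by ring
    obtain ⟨rfl, rfl⟩ := Vinj k B C B' C' (K'+1) hB hC hB' hC' heq
    have h0 : (K'+1)*((2*k+4)*(2*k+3)) = 0 := by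
      have := heq
      omega
    simp [Nat.mul_eq_zero] at h0

end BresAux

open BresAux in
theorem stmt6 (h : ℕ) (hh : 2 ≤ h) :
    {s : ℕ | Bres h s ∧ ¬ ∃ t : ℕ, Bres h t ∧ t + (2*h*(2*h-1)) = s} =
      {0} ∪ {x : ℕ | ∃ i, 1 ≤ i ∧ i ≤ 2*h-1 ∧ x = i * ((2*h+1)*(2*h-1))}
        ∪ {x : ℕ | ∃ i, 1 ≤ i ∧ i ≤ 2*h-2 ∧ x = i * (2*h*(2*h+1))}
        ∪ {x : ℕ | ∃ i, 1 ≤ i ∧ i ≤ 2*h-2 ∧ x = i * (2*h*(2*h+1)+(2*h-1))}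
        ∪ {x : ℕ | ∃ i j, 1 ≤ i ∧ i ≤ 2*h-2 ∧ 1 ≤ j ∧ j ≤ (2*h-1) - i ∧
            x = i * ((2*h+1)*(2*h-1)) + j * (2*h*(2*h+1)+(2*h-1))}
        ∪ {x : ℕ | ∃ i j, 1 ≤ i ∧ i ≤ 2*h-3 ∧ 1 ≤ j ∧ j ≤ (2*h-2) - i ∧
            x = i * (2*h*(2*h+1)) + j * (2*h*(2*h+1)+(2*h-1))} := by
  obtain ⟨k, rfl⟩ : ∃ k, h = k + 2 := ⟨h - 2, by omega⟩
  ext x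
  simp only [Set.mem_union, Set.mem_setOf_eq, Set.mem_singleton_iff,
    show 2*(k+2) = 2*k+4 from by ring, show 2*k+4-1 = 2*k+3 from by omega,
    show 2*k+4-2 = 2*k+2 from by omega, show 2*k+4-3 = 2*k+1 from by omega,
    show 2*k+4+1 = 2*k+5 from by omega]
  constructor
  · rintro ⟨hxB, hnot⟩
    obtain ⟨K, B, C, hB, hC, rfl⟩ := NF k x hxB
    have hK : K = 0 := by
      by_contra hK0
      obtain ⟨K', rfl⟩ : ∃ K', K = K'+1 := ⟨K-1, by omega⟩
      exact hnot ⟨K'*((2*k+4)*(2*k+3)) + V k B C, BresV k K' B C, by ring⟩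
    subst hK
    simp only [zero_mul, zero_add]
    by_cases hB0 : B = 0
    · subst hB0
      by_cases hC0 : C = 0
      · subst hC0
        exact Or.inl (Or.inl (Or.inl (Or.inl (Or.inl (V00 k)))))
      · exact Or.inl (Or.inl (Or.inl (Or.inr ⟨C, by omega, hC, VB0 k C⟩)))
    · by_cases hC0 : C = 0
      · subst hC0
        exact Or.inl (Or.inl (Or.inl (Or.inl (Or.inr ⟨B, by omega, hB, VC0 k B⟩))))
      · rcases lt_trichotomy B C with hlt | rfl | hlt
        · obtain ⟨i, rfl⟩ : ∃ i, C = i + B := ⟨C - B, by omega⟩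
          exact Or.inr ⟨i, B, by omega, by omega, by omega, by omega, Vsplit2 k i B⟩
        · exact Or.inl (Or.inl (Or.inr ⟨B, by omega, by omega, VBB k B⟩))
        · obtain ⟨i, rfl⟩ : ∃ i, B = i + C := ⟨B - C, by omega⟩
          exact Or.inl (Or.inr ⟨i, C, by omega, by omega, by omega, by omega, Vsplit1 k i C⟩)
  · rintro (((((rfl | ⟨i, hi1, hi2, rfl⟩) | ⟨i, hi1, hi2, rfl⟩) | ⟨i, hi1, hi2, rfl⟩) |
      ⟨i, j, hi1, hi2, hj1, hj2, rfl⟩) | ⟨i, j, hi1, hi2, hj1, hj2, rfl⟩)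
    · have := apery_mem k 0 0 (by omega) (by omega)
      rwa [V00] at this
    · have := apery_mem k i 0 (by omega) (by omega)
      rwa [VC0] at this
    · have := apery_mem k 0 i (by omega) (by omega)
      rwa [VB0] at this
    · have := apery_mem k i i (by omega) (by omega)
      rwa [VBB] at this
    · have := apery_mem k (i+j) j (by omega) (by omega)
      rwa [Vsplit1] at this
    · have := apery_mem k j (i+j) (by omega) (by omega)
      rwa [Vsplit2] at this
end

section
/- For an integer h ≥ 2, if c₁, c₂, c₃ are nonnegative integers with (2h−1)·m₁ = c₁·m₁ + c₂·m₂ + c₃·m₃, where m₁ = (2h+1)(2h−1), m₂ = 2h(2h+1), m₃ = 2h(2h+1)+(2h−1), then c₁ = 2h−1 and c₂ = c₃ = 0. -/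
theorem stmt7 (h : ℕ) (hh : 2 ≤ h) (c1 c2 c3 : ℕ)
    (heq : (2*h-1) * ((2*h+1)*(2*h-1)) = c1 * ((2*h+1)*(2*h-1)) + c2 * (2*h*(2*h+1)) + c3 * (2*h*(2*h+1)+(2*h-1))) :
    c1 = 2*h-1 ∧ c2 = 0 ∧ c3 = 0 := by
  obtain ⟨a, ha, ha3, haodd⟩ : ∃ a, 2*h = a+1 ∧ 3 ≤ a ∧ a % 2 = 1 := ⟨2*h-1, by omega, by omega, by omega⟩
  have e1 : 2*h-1 = a := by omega
  have e2 : 2*h+1 = a+2 := by omega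
  rw [e1, e2, ha] at heq
  rw [e1]
  -- heq : a * ((a+2)*a) = c1 * ((a+2)*a) + c2 * ((a+1)*(a+2)) + c3 * ((a+1)*(a+2)+a)
  -- Step 1: (a+2) ∣ c3 * a
  have hd1 : (a+2) ∣ c3 * a := by
    have h1 : (a+2) ∣ a * ((a+2)*a) := ⟨a*a, by ring⟩
    have h2 : (a+2) ∣ c1 * ((a+2)*a) + c2 * ((a+1)*(a+2)) + c3 * ((a+1)*(a+2)) :=
      ⟨c1*a + c2*(a+1) + c3*(a+1), by ring⟩
    have h3 : c3 * a = a * ((a+2)*a) - (c1 * ((a+2)*a) + c2 * ((a+1)*(a+2)) + c3 * ((a+1)*(a+2))) := by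
      have : c3 * ((a+1)*(a+2)+a) = c3 * ((a+1)*(a+2)) + c3 * a := by ring
      omega
    rw [h3]
    exact Nat.dvd_sub h1 h2
  have hcop : Nat.Coprime (a+2) a := by
    unfold Nat.Coprime
    rw [Nat.gcd_self_add_left a 2, Nat.gcd_rec, haodd]
    decide
  have hd3 : (a+2) ∣ c3 := hcop.dvd_of_dvd_mul_right hd1
  have hc3 : c3 = 0 := by
    rcases hd3 with ⟨k, hk⟩
    rcases Nat.eq_zero_or_pos k with hk0 | hk0
    · simp [hk0] at hk; exact hk
    · exfalso
      have hge : a + 2 ≤ c3 := by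
        calc a + 2 = (a+2)*1 := by ring
        _ ≤ (a+2)*k := Nat.mul_le_mul_left _ hk0
        _ = c3 := hk.symm
      have h5 : (a+2) * ((a+1)*(a+2)+a) ≤ c3 * ((a+1)*(a+2)+a) :=
        Nat.mul_le_mul_right _ hge
      have h8 : a * ((a+2)*a) < (a+2) * ((a+1)*(a+2)+a) := by nlinarith
      have h9 : c3 * ((a+1)*(a+2)+a) ≤ a * ((a+2)*a) := by omega
      omega
  subst hc3
  -- now: a * ((a+2)*a) = c1 * ((a+2)*a) + c2 * ((a+1)*(a+2))
  have heq2 : a * a = c1 * a + c2 * (a+1) := by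
    have h1 : (a+2) * (a*a) = (a+2) * (c1*a + c2*(a+1)) := by nlinarith [heq]
    exact Nat.eq_of_mul_eq_mul_left (by omega) h1
  have hd2 : a ∣ c2 * (a+1) := by
    have h1 : a ∣ a * a := ⟨a, rfl⟩
    have h2 : a ∣ c1 * a := ⟨c1, by ring⟩
    have h3 : c2 * (a+1) = a * a - c1 * a := by omega
    rw [h3]; exact Nat.dvd_sub h1 h2
  have hcop2 : Nat.Coprime a (a+1) := by
    unfold Nat.Coprime
    rw [show a+1 = 1+a from by ring, Nat.gcd_add_self_right, Nat.gcd_one_right]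
  have hdc2 : a ∣ c2 := hcop2.dvd_of_dvd_mul_right hd2
  have hc2 : c2 = 0 := by
    rcases hdc2 with ⟨k, hk⟩
    rcases Nat.eq_zero_or_pos k with hk0 | hk0
    · simp [hk0] at hk; exact hk
    · exfalso
      have hge : a ≤ c2 := by
        calc a = a*1 := by ring
        _ ≤ a*k := Nat.mul_le_mul_left _ hk0
        _ = c2 := hk.symm
      have h5 : a * (a+1) ≤ c2 * (a+1) := Nat.mul_le_mul_right _ hge
      have h8 : a * a < a * (a+1) := by nlinarith
      have h9 : c2 * (a+1) ≤ a * a := by omega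
      omega
  subst hc2
  have hc1 : c1 = a := by
    have : a * a = c1 * a := by simpa using heq2
    have := Nat.eq_of_mul_eq_mul_right (by omega : 0 < a) this.symm
    omega
  exact ⟨hc1, rfl, rfl⟩
end

section
/- For an integer h ≥ 2, if c₁, c₂, c₃ are nonnegative integers with (2h−2)·m₂ = c₁·m₁ + c₂·m₂ + c₃·m₃, where m₁ = (2h+1)(2h−1), m₂ = 2h(2h+1), m₃ = 2h(2h+1)+(2h−1), then c₂ = 2h−2 and c₁ = c₃ = 0. -/
set_option maxHeartbeats 800000 in
theorem stmt8 (h : ℕ) (hh : 2 ≤ h) (c1 c2 c3 : ℕ)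
    (heq : (2*h-2) * (2*h*(2*h+1)) = c1 * ((2*h+1)*(2*h-1)) + c2 * (2*h*(2*h+1)) + c3 * (2*h*(2*h+1)+(2*h-1))) :
    c2 = 2*h-2 ∧ c1 = 0 ∧ c3 = 0 := by
  have h2 : (2:ℕ) ≤ 2*h := by omega
  have h1 : (1:ℕ) ≤ 2*h := by omega
  zify [h2, h1] at heq
  have hH2 : (2:ℤ) ≤ (h:ℤ) := by exact_mod_cast hh
  set H : ℤ := (h:ℤ) with hH
  have hc1 : (0:ℤ) ≤ (c1:ℤ) := Int.natCast_nonneg c1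
  have hc2 : (0:ℤ) ≤ (c2:ℤ) := Int.natCast_nonneg c2
  have hc3 : (0:ℤ) ≤ (c3:ℤ) := Int.natCast_nonneg c3
  -- c3 = 0
  have hdvd3 : (2*H+1) ∣ (c3:ℤ) := by
    have hcop : IsCoprime (2*H+1) (2*H-1) := ⟨H, -H-1, by ring⟩
    refine hcop.dvd_of_dvd_mul_right ?_
    exact ⟨(2*H-2)*(2*H) - c1*(2*H-1) - c2*(2*H) - c3*(2*H), by linear_combination -heq⟩
  have hlt3 : (c3:ℤ) < 2*H+1 := by
    by_contra hcon
    push_neg at hcon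
    nlinarith [mul_nonneg hc1 (by nlinarith : (0:ℤ) ≤ (2*H+1)*(2*H-1)),
      mul_nonneg hc2 (by nlinarith : (0:ℤ) ≤ 2*H*(2*H+1)),
      mul_le_mul_of_nonneg_right hcon (by nlinarith : (0:ℤ) ≤ 2*H*(2*H+1)+(2*H-1))]
  have hc3z : (c3:ℤ) = 0 := by
    rcases eq_or_lt_of_le hc3 with h' | h'
    · exact h'.symm
    · exact absurd (Int.le_of_dvd h' hdvd3) (by linarith)
  rw [hc3z] at heq
  -- c1 = 0
  have hdvd1 : (2*H) ∣ (c1:ℤ) := by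
    refine ⟨-((2*H-2)*(2*H+1) - c2*(2*H+1) - c1*(2*H)), ?_⟩
    linear_combination heq
  have hlt1 : (c1:ℤ) < 2*H := by
    by_contra hcon
    push_neg at hcon
    nlinarith [mul_nonneg hc2 (by nlinarith : (0:ℤ) ≤ 2*H*(2*H+1)),
      mul_le_mul_of_nonneg_right hcon (by nlinarith : (0:ℤ) ≤ (2*H+1)*(2*H-1))]
  have hc1z : (c1:ℤ) = 0 := by
    rcases eq_or_lt_of_le hc1 with h' | h'
    · exact h'.symm
    · exact absurd (Int.le_of_dvd h' hdvd1) (by linarith)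
  rw [hc1z] at heq
  -- c2
  have hc2z : (c2:ℤ) = 2*H - 2 := by
    have hpos : (0:ℤ) < 2*H*(2*H+1) := by nlinarith
    have heq' : (c2:ℤ) * (2*H*(2*H+1)) = (2*H-2) * (2*H*(2*H+1)) := by linarith
    exact mul_right_cancel₀ hpos.ne' heq'
  have key : (c1 : ℤ) = 0 ∧ (c3 : ℤ) = 0 ∧ (c2:ℤ) = 2*(h:ℤ) - 2 := ⟨hc1z, hc3z, hc2z⟩
  refine ⟨by omega, by omega, by omega⟩
end

section
/- For an integer h ≥ 2 and 1 ≤ i ≤ 2h−2, if c₁, c₂, c₃ are nonnegative integers with i·m₁ + (2h−1−i)·m₃ = c₁·m₁ + c₂·m₂ + c₃·m₃, where m₁ = (2h+1)(2h−1), m₂ = 2h(2h+1), m₃ = 2h(2h+1)+(2h−1), then c₁ = i, c₂ = 0, and c₃ = 2h−1−i. -/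
set_option maxHeartbeats 1000000 in
theorem stmt9 (h : ℕ) (hh : 2 ≤ h) (i : ℕ) (hi1 : 1 ≤ i) (hi2 : i ≤ 2*h-2)
    (c1 c2 c3 : ℕ)
    (heq : i * ((2*h+1)*(2*h-1)) + (2*h-1-i) * (2*h*(2*h+1)+(2*h-1)) = c1 * ((2*h+1)*(2*h-1)) + c2 * (2*h*(2*h+1)) + c3 * (2*h*(2*h+1)+(2*h-1))) :
    c1 = i ∧ c2 = 0 ∧ c3 = 2*h-1-i := by
  have h1 : i ≤ 2*h-1 := by omega
  have h2 : 1 ≤ 2*h := by omega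
  zify [h1, h2] at heq
  have hHge : (2:ℤ) ≤ (h:ℤ) := by exact_mod_cast hh
  have hIge : (1:ℤ) ≤ (i:ℤ) := by exact_mod_cast hi1
  have hIle : (i:ℤ) ≤ 2*(h:ℤ) - 2 := by
    have : (i:ℤ) ≤ ((2*h-2 : ℕ) : ℤ) := by exact_mod_cast hi2
    omega
  have hC1ge : (0:ℤ) ≤ (c1:ℤ) := Int.natCast_nonneg c1
  have hC2ge : (0:ℤ) ≤ (c2:ℤ) := Int.natCast_nonneg c2
  have hC3ge : (0:ℤ) ≤ (c3:ℤ) := Int.natCast_nonneg c3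
  -- key rearrangement
  have hkey : (c3:ℤ) * (2*(h:ℤ)*(2*(h:ℤ)+1)+(2*(h:ℤ)-1)) + (i:ℤ)*(4*(h:ℤ))
      + (c1:ℤ) * ((2*(h:ℤ)+1)*(2*(h:ℤ)-1)) + (c2:ℤ) * (2*(h:ℤ)*(2*(h:ℤ)+1))
      = (2*(h:ℤ)-1) * (2*(h:ℤ)*(2*(h:ℤ)+1)+(2*(h:ℤ)-1)) := by
    linear_combination -heq
  -- Step A: c3 ≤ 2h - 2
  have hm3pos : (0:ℤ) < 2*(h:ℤ)*(2*(h:ℤ)+1)+(2*(h:ℤ)-1) := by nlinarith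
  have hC3le : (c3:ℤ) ≤ 2*(h:ℤ) - 2 := by
    nlinarith [mul_nonneg hC1ge (by nlinarith : (0:ℤ) ≤ (2*(h:ℤ)+1)*(2*(h:ℤ)-1)),
      mul_nonneg hC2ge (by nlinarith : (0:ℤ) ≤ 2*(h:ℤ)*(2*(h:ℤ)+1))]
  -- Step B: c3 = 2h-1-i
  have hdvd : (2*(h:ℤ)+1) ∣ (2*(h:ℤ)-1-(i:ℤ) - (c3:ℤ)) * (2*(h:ℤ)-1) := by
    refine ⟨((c1:ℤ) - i)*(2*(h:ℤ)-1) + ((c2:ℤ) + c3 - (2*(h:ℤ)-1-i))*(2*(h:ℤ)), ?_⟩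
    linear_combination heq
  have hcop : IsCoprime (2*(h:ℤ)+1) (2*(h:ℤ)-1) := ⟨(h:ℤ), -((h:ℤ)+1), by ring⟩
  have hdvd' : (2*(h:ℤ)+1) ∣ (2*(h:ℤ)-1-(i:ℤ) - (c3:ℤ)) := hcop.dvd_of_dvd_mul_right hdvd
  have hC3eq : (c3:ℤ) = 2*(h:ℤ)-1-(i:ℤ) := by
    have habs : |2*(h:ℤ)-1-(i:ℤ) - (c3:ℤ)| < 2*(h:ℤ)+1 := by
      rw [abs_lt]; constructor <;> linarith
    have := Int.eq_zero_of_abs_lt_dvd hdvd' habs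
    linarith
  -- Step C: c2 = 0, c1 = i
  have heq2 : ((i:ℤ) - c1) * (2*(h:ℤ)-1) * (2*(h:ℤ)+1) = (c2:ℤ) * (2*(h:ℤ)) * (2*(h:ℤ)+1) := by
    linear_combination heq + (2*(h:ℤ)*(2*(h:ℤ)+1)+(2*(h:ℤ)-1)) * hC3eq
  have heq3 : ((i:ℤ) - c1) * (2*(h:ℤ)-1) = (c2:ℤ) * (2*(h:ℤ)) :=
    mul_right_cancel₀ (by omega : (2*(h:ℤ)+1) ≠ 0) heq2
  have hcop2 : IsCoprime (2*(h:ℤ)-1) (2*(h:ℤ)) := ⟨-1, 1, by ring⟩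
  have hdvd2 : (2*(h:ℤ)-1) ∣ (c2:ℤ) :=
    hcop2.dvd_of_dvd_mul_right ⟨(i:ℤ) - c1, by linarith [heq3]⟩
  have hC2eq : (c2:ℤ) = 0 := by
    rcases hdvd2 with ⟨s, hs⟩
    rcases le_or_gt s 0 with hs0 | hs0
    · have h5 : (2*(h:ℤ)-1) * s ≤ 0 :=
        mul_nonpos_of_nonneg_of_nonpos (by linarith) hs0
      linarith [hs, hC2ge]
    · exfalso
      have hs1 : (1:ℤ) ≤ s := hs0
      have hb : (2*(h:ℤ)-1) * 1 ≤ (2*(h:ℤ)-1) * s :=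
        mul_le_mul_of_nonneg_left hs1 (by linarith)
      have hc2b : (2*(h:ℤ)-1) ≤ (c2:ℤ) := by rw [hs]; linarith [hb]
      have hb2 : (2*(h:ℤ)-1)*(2*(h:ℤ)) ≤ (c2:ℤ) * (2*(h:ℤ)) :=
        mul_le_mul_of_nonneg_right hc2b (by linarith)
      have hb3 : ((i:ℤ) - c1) * (2*(h:ℤ)-1) ≤ (2*(h:ℤ)-2) * (2*(h:ℤ)-1) :=
        mul_le_mul_of_nonneg_right (by linarith) (by linarith)
      nlinarith [heq3, hb2, hb3]
  have hC1eq : (c1:ℤ) = (i:ℤ) := by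
    have hz : ((i:ℤ) - c1) * (2*(h:ℤ)-1) = 0 := by rw [heq3, hC2eq]; ring
    rcases mul_eq_zero.1 hz with h' | h' <;> omega
  refine ⟨by omega, by omega, by omega⟩
end

section
/- For an integer h ≥ 2, the Bresinsky semigroup Γ_h = ⟨m₀, m₁, m₂, m₃⟩ with m₀ = 2h(2h−1), m₁ = (2h+1)(2h−1), m₂ = 2h(2h+1), m₃ = 2h(2h+1)+(2h−1), satisfies: for all k ≥ 0 and 1 ≤ i ≤ 2h−1, the order of i·m₁ + k·m₀ in Γ_h equals i + k, i.e., the maximum of a₀+a₁+a₂+a₃ over all nonnegative integer solutions of i·m₁ + k·m₀ = a₀m₀ + a₁m₁ + a₂m₂ + a₃m₃ is i + k. -/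
theorem stmt10 (h : ℕ) (hh : 2 ≤ h) (k i : ℕ) (hi1 : 1 ≤ i) (hi2 : i ≤ 2*h-1) :
    IsGreatest {n : ℕ | ∃ a b c d : ℕ, a + b + c + d = n ∧ i * ((2*h+1)*(2*h-1)) + k * (2*h*(2*h-1)) = a * (2*h*(2*h-1)) + b * ((2*h+1)*(2*h-1)) + c * (2*h*(2*h+1)) + d * (2*h*(2*h+1)+(2*h-1))} (i + k) := by
  obtain ⟨m, rfl⟩ : ∃ m, h = m + 2 := ⟨h - 2, by omega⟩
  constructor
  · exact ⟨k, i, 0, 0, by ring, by ring⟩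
  · rintro n ⟨a, b, c, d, hsum, heq⟩
    have h1 : 2*(m+2)-1 = 2*m+3 := by omega
    rw [h1] at heq hi2
    nlinarith [heq, hi2, hi1, sq_nonneg (m : ℕ), Nat.zero_le m,
      Nat.zero_le a, Nat.zero_le b, Nat.zero_le c, Nat.zero_le d]
end

section
/- For an integer h ≥ 2, 1 ≤ i ≤ 2h−2, 1 ≤ j ≤ (2h−1)−i, and any k ≥ 0, the order of i·m₁ + j·m₃ + k·m₀ in the Bresinsky semigroup Γ_h equals i + j + k. -/
theorem stmt11 (h : ℕ) (hh : 2 ≤ h) (k i j : ℕ) (hi1 : 1 ≤ i) (hi2 : i ≤ 2*h-2)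
    (hj1 : 1 ≤ j) (hj2 : j ≤ (2*h-1) - i) :
    IsGreatest {n : ℕ | ∃ a b c d : ℕ, a + b + c + d = n ∧ i * ((2*h+1)*(2*h-1)) + j * (2*h*(2*h+1)+(2*h-1)) + k * (2*h*(2*h-1)) = a * (2*h*(2*h-1)) + b * ((2*h+1)*(2*h-1)) + c * (2*h*(2*h+1)) + d * (2*h*(2*h+1)+(2*h-1))} (i + j + k) := by
  constructor
  · exact ⟨k, i, 0, j, by ring, by ring⟩
  · rintro n ⟨a, b, c, d, hsum, hval⟩
    have h1 : (1:ℕ) ≤ 2*h := by omega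
    have hIJ : (i:ℤ) + j ≤ 2*h - 1 := by
      have : i + j ≤ 2*h - 1 := by omega
      have := (Nat.cast_le (α := ℤ)).2 this
      push_cast [h1] at this
      linarith
    have hJ : (j:ℤ) ≤ 2*h - 2 := by
      have : j ≤ 2*h - 2 := by omega
      have := (Nat.cast_le (α := ℤ)).2 this
      push_cast [show (2:ℕ) ≤ 2*h by omega] at this
      linarith
    by_contra hn
    push_neg at hn
    zify [h1] at hval
    have hH : (2:ℤ) ≤ (h:ℤ) := by exact_mod_cast hh
    have key : (((a:ℤ)+b+c+d) - ((i:ℤ)+j+k)) * (2*h*(2*h-1))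
        = (2*h-1)*(((i:ℤ)+j) - ((b:ℤ)+d)) + 4*h*((j:ℤ) - ((c:ℤ)+d)) := by
      linear_combination -hval
    have hdvd4 : (2*(h:ℤ)-1) ∣ 4*h*((j:ℤ) - ((c:ℤ)+d)) :=
      ⟨2*h*(((a:ℤ)+b+c+d) - ((i:ℤ)+j+k)) - (((i:ℤ)+j) - ((b:ℤ)+d)),
        by linear_combination -key⟩
    have hdvd2 : (2*(h:ℤ)-1) ∣ 2*((j:ℤ) - ((c:ℤ)+d)) := by
      obtain ⟨q, hq⟩ := hdvd4
      exact ⟨q - 2*((j:ℤ) - ((c:ℤ)+d)), by linear_combination hq⟩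
    have hcop : IsCoprime (2*(h:ℤ)-1) (2:ℤ) := ⟨-1, h, by ring⟩
    have hdvd : (2*(h:ℤ)-1) ∣ ((j:ℤ) - ((c:ℤ)+d)) := hcop.dvd_of_dvd_mul_left hdvd2
    obtain ⟨m, hm⟩ := hdvd
    have hc0 : (0:ℤ) ≤ (c:ℤ) := by positivity
    have hd0 : (0:ℤ) ≤ (d:ℤ) := by positivity
    have hb0 : (0:ℤ) ≤ (b:ℤ) := by positivity
    have hm0 : m ≤ 0 := by nlinarith [hm]
    have hn' : ((i:ℤ)+j+k) + 1 ≤ (a:ℤ)+b+c+d := by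
      have : i + j + k + 1 ≤ a + b + c + d := by omega
      exact_mod_cast this
    have hz : (2*(h:ℤ)-1) * (2*h*(((a:ℤ)+b+c+d) - ((i:ℤ)+j+k))
        - (((i:ℤ)+j) - ((b:ℤ)+d)) - 4*h*m) = 0 := by
      linear_combination key + 4*(h:ℤ)*hm
    have hne : (2*(h:ℤ)-1) ≠ 0 := by linarith
    have hz2 : 2*(h:ℤ)*(((a:ℤ)+b+c+d) - ((i:ℤ)+j+k))
        - (((i:ℤ)+j) - ((b:ℤ)+d)) - 4*h*m = 0 := by
      rcases mul_eq_zero.1 hz with h' | h'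
      · exact absurd h' hne
      · exact h'
    have p1 : 2*(h:ℤ)*1 ≤ 2*(h:ℤ)*(((a:ℤ)+b+c+d) - ((i:ℤ)+j+k)) := by
      have h1' : (1:ℤ) ≤ ((a:ℤ)+b+c+d) - ((i:ℤ)+j+k) := by linarith
      exact mul_le_mul_of_nonneg_left h1' (by positivity)
    have p2 : 4*(h:ℤ)*m ≤ 0 :=
      mul_nonpos_of_nonneg_of_nonpos (by positivity) hm0
    linarith [hz2, p1, p2, hIJ, hb0, hd0, hH]
end

section
/- For an integer m ≥ 2, let n₁ = m(m+1), n₂ = m(m+1)+1, n₃ = (m+1)², n₄ = (m+1)²+1, and let S_m be the numerical semigroup generated by n₁, n₂, n₃, n₄. Then m·n₂ − n₁ ∉ S_m. -/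
/-- Membership in the Arslan semigroup S_m generated by
n₁ = m(m+1), n₂ = m(m+1)+1, n₃ = (m+1)², n₄ = (m+1)²+1. -/
def Ars (m x : ℕ) : Prop :=
  ∃ a b c d : ℕ, x = a * (m*(m+1)) + b * (m*(m+1)+1) +
    c * ((m+1)^2) + d * ((m+1)^2+1)

theorem stmt12 (m : ℕ) (hm : 2 ≤ m) :
    ¬ ∃ t : ℕ, (Ars m) t ∧ t + (m*(m+1)) = m * (m*(m+1)+1) := by
  rintro ⟨t, ⟨a, b, c, d, rfl⟩, heq⟩
  -- Rewrite the equation in quotient-remainder form mod (m+1)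
  have E2 : (m+1) * (a*m + b*m + c*(m+1) + d*(m+1) + m) + (b+d)
      = (m+1) * (m*m) + m := by zify at heq ⊢; linear_combination heq
  -- Bound: total number of generators used is at most m
  have hbound : (a + b + c + d + 1) * (m*(m+1)) ≤ m * (m*(m+1)+1) := by
    nlinarith [heq, sq_nonneg (m+1)]
  have hsm : a + b + c + d + 1 ≤ m := by
    by_contra h
    push_neg at h
    have : (m+1) * (m*(m+1)) ≤ (a+b+c+d+1) * (m*(m+1)) :=
      Nat.mul_le_mul_right _ h
    nlinarith
  have hbd : b + d < m := by omega
  -- Take both sides of E2 mod (m+1)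
  have hmod : (b+d) % (m+1) = m % (m+1) := by
    conv_lhs => rw [← Nat.mul_add_mod (m+1) (a*m + b*m + c*(m+1) + d*(m+1) + m) (b+d)]
    rw [E2, Nat.mul_add_mod]
  have h1 : (b + d) % (m+1) = b + d := Nat.mod_eq_of_lt (by omega)
  have h2 : m % (m+1) = m := Nat.mod_eq_of_lt (by omega)
  omega
end

section
/- For an integer m ≥ 2 and the Arslan semigroup S_m = ⟨n₁, n₂, n₃, n₄⟩, the Apéry set Ap(S_m, n₁) equals {0} ∪ 𝔄₁ ∪ 𝔄₂ ∪ 𝔄₃ ∪ 𝔄₄ ∪ 𝔄₅, where 𝔄₁ = {i·n₂ : 1 ≤ i ≤ m}, 𝔄₂ = {i·n₃ : 1 ≤ i ≤ m−1}, 𝔄₃ = {i·n₄ : 1 ≤ i ≤ m−1}, 𝔄₄ = {i·n₂ + j·n₄ : 1 ≤ i ≤ m−1, 1 ≤ j ≤ m−i}, 𝔄₅ = {i·n₃ + j·n₄ : 1 ≤ i ≤ m−2, 1 ≤ j ≤ (m−1)−i}. -/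
def NF (m b c d : ℕ) : Prop :=
  b ≤ m ∧ c + 1 ≤ m ∧ d + 1 ≤ m ∧ (b = 0 ∨ c = 0) ∧
    (b = 0 ∨ d = 0 ∨ b + d ≤ m) ∧ (c = 0 ∨ d = 0 ∨ c + d + 1 ≤ m)

lemma norm_lemma (m : ℕ) (hm : 2 ≤ m) (v : ℕ) :
    ∀ b c d : ℕ, b*(m*(m+1)+1) + c*((m+1)^2) + d*((m+1)^2+1) = v →
      ∃ B C D K : ℕ, NF m B C D ∧
        v = B*(m*(m+1)+1) + C*((m+1)^2) + D*((m+1)^2+1) + K*(m*(m+1)) := by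
  induction v using Nat.strong_induction_on with
  | _ v ih =>
  intro b c d hv
  have hn1 : 0 < m*(m+1) := Nat.mul_pos (by omega) (by omega)
  by_cases h1 : 1 ≤ b ∧ 1 ≤ c
  · obtain ⟨b1, rfl⟩ : ∃ b1, b = b1 + 1 := ⟨b-1, by omega⟩
    obtain ⟨c1, rfl⟩ : ∃ c1, c = c1 + 1 := ⟨c-1, by omega⟩
    have hv' : b1*(m*(m+1)+1) + c1*((m+1)^2) + (d+1)*((m+1)^2+1) + 1*(m*(m+1)) = v := by
      rw [← hv]; ring
    have hk : 0 < 1*(m*(m+1)) := by simpa using hn1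
    have hlt : b1*(m*(m+1)+1) + c1*((m+1)^2) + (d+1)*((m+1)^2+1) < v := by linarith
    obtain ⟨B, C, D, K, hNF, hEq⟩ := ih _ hlt b1 c1 (d+1) rfl
    exact ⟨B, C, D, K + 1, hNF, by rw [← hv', hEq]; ring⟩
  · by_cases h2 : m ≤ c
    · obtain ⟨c1, rfl⟩ : ∃ c1, c = m + c1 := ⟨c-m, by omega⟩
      have hv' : b*(m*(m+1)+1) + c1*((m+1)^2) + d*((m+1)^2+1) + (m+1)*(m*(m+1)) = v := by
        rw [← hv]; ring
      have hk : 0 < (m+1)*(m*(m+1)) := Nat.mul_pos (by omega) hn1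
      have hlt : b*(m*(m+1)+1) + c1*((m+1)^2) + d*((m+1)^2+1) < v := by linarith
      obtain ⟨B, C, D, K, hNF, hEq⟩ := ih _ hlt b c1 d rfl
      exact ⟨B, C, D, K + (m+1), hNF, by rw [← hv', hEq]; ring⟩
    · by_cases h3 : m ≤ d
      · obtain ⟨d1, rfl⟩ : ∃ d1, d = m + d1 := ⟨d-m, by omega⟩
        have hv' : (b+m)*(m*(m+1)+1) + c*((m+1)^2) + d1*((m+1)^2+1) + 1*(m*(m+1)) = v := by
          rw [← hv]; ring
        have hk : 0 < 1*(m*(m+1)) := by simpa using hn1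
        have hlt : (b+m)*(m*(m+1)+1) + c*((m+1)^2) + d1*((m+1)^2+1) < v := by linarith
        obtain ⟨B, C, D, K, hNF, hEq⟩ := ih _ hlt (b+m) c d1 rfl
        exact ⟨B, C, D, K + 1, hNF, by rw [← hv', hEq]; ring⟩
      · by_cases h4 : m + 1 ≤ b
        · obtain ⟨b1, rfl⟩ : ∃ b1, b = (m+1) + b1 := ⟨b-(m+1), by omega⟩
          have hv' : b1*(m*(m+1)+1) + (c+1)*((m+1)^2) + d*((m+1)^2+1) + m*(m*(m+1)) = v := by
            rw [← hv]; ring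
          have hk : 0 < m*(m*(m+1)) := Nat.mul_pos (by omega) hn1
          have hlt : b1*(m*(m+1)+1) + (c+1)*((m+1)^2) + d*((m+1)^2+1) < v := by linarith
          obtain ⟨B, C, D, K, hNF, hEq⟩ := ih _ hlt b1 (c+1) d rfl
          exact ⟨B, C, D, K + m, hNF, by rw [← hv', hEq]; ring⟩
        · by_cases h5 : 1 ≤ b ∧ 1 ≤ d ∧ m + 1 ≤ b + d
          · obtain ⟨i0, b2, rfl, hm'⟩ : ∃ i0 b2, b = (i0+1) + b2 ∧ m = i0 + d :=
              ⟨m - d, b - (m+1-d), by omega, by omega⟩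
            subst hm'
            have hv' : b2*((i0+d)*((i0+d)+1)+1) + (c+d+1)*(((i0+d)+1)^2) + 0*(((i0+d)+1)^2+1)
                + i0*((i0+d)*((i0+d)+1)) = v := by rw [← hv]; ring
            have hk : 0 < i0*((i0+d)*((i0+d)+1)) := Nat.mul_pos (by omega) hn1
            have hlt : b2*((i0+d)*((i0+d)+1)+1) + (c+d+1)*(((i0+d)+1)^2)
                + 0*(((i0+d)+1)^2+1) < v := by linarith
            obtain ⟨B, C, D, K, hNF, hEq⟩ := ih _ hlt b2 (c+d+1) 0 rfl
            exact ⟨B, C, D, K + i0, hNF, by rw [← hv', hEq]; ring⟩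
          · by_cases h6 : 1 ≤ c ∧ 1 ≤ d ∧ m ≤ c + d
            · obtain ⟨i0, c2, rfl, hm'⟩ : ∃ i0 c2, c = i0 + c2 ∧ m = i0 + d :=
                ⟨m - d, c - (m-d), by omega, by omega⟩
              subst hm'
              have hv' : (b+d)*((i0+d)*((i0+d)+1)+1) + c2*(((i0+d)+1)^2) + 0*(((i0+d)+1)^2+1)
                  + (i0+1)*((i0+d)*((i0+d)+1)) = v := by rw [← hv]; ring
              have hk : 0 < (i0+1)*((i0+d)*((i0+d)+1)) := Nat.mul_pos (by omega) hn1
              have hlt : (b+d)*((i0+d)*((i0+d)+1)+1) + c2*(((i0+d)+1)^2)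
                  + 0*(((i0+d)+1)^2+1) < v := by linarith
              obtain ⟨B, C, D, K, hNF, hEq⟩ := ih _ hlt (b+d) c2 0 rfl
              exact ⟨B, C, D, K + (i0+1), hNF, by rw [← hv', hEq]; ring⟩
            · exact ⟨b, c, d, 0, ⟨by omega, by omega, by omega, by omega, by omega, by omega⟩,
                by rw [← hv]; ring⟩

def Aset (m : ℕ) : Set ℕ :=
  {0} ∪ {x : ℕ | ∃ i, 1 ≤ i ∧ i ≤ m ∧ x = i * (m*(m+1)+1)}
    ∪ {x : ℕ | ∃ i, 1 ≤ i ∧ i ≤ m-1 ∧ x = i * ((m+1)^2)}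
    ∪ {x : ℕ | ∃ i, 1 ≤ i ∧ i ≤ m-1 ∧ x = i * ((m+1)^2+1)}
    ∪ {x : ℕ | ∃ i j, 1 ≤ i ∧ i ≤ m-1 ∧ 1 ≤ j ∧ j ≤ m - i ∧
        x = i * (m*(m+1)+1) + j * ((m+1)^2+1)}
    ∪ {x : ℕ | ∃ i j, 1 ≤ i ∧ i ≤ m-2 ∧ 1 ≤ j ∧ j ≤ (m-1) - i ∧
        x = i * ((m+1)^2) + j * ((m+1)^2+1)}

lemma NF_mem (m B C D : ℕ) (hm : 2 ≤ m) (h : NF m B C D) :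
    B*(m*(m+1)+1) + C*((m+1)^2) + D*((m+1)^2+1) ∈ Aset m := by
  obtain ⟨hb, hc, hd, hbc, hbd, hcd⟩ := h
  simp only [Aset, Set.mem_union, Set.mem_singleton_iff, Set.mem_setOf_eq]
  by_cases hB : B = 0 <;> by_cases hC : C = 0 <;> by_cases hD : D = 0
  · subst hB; subst hC; subst hD; left; left; left; left; left; ring
  · subst hB; subst hC
    left; left; right
    exact ⟨D, by omega, by omega, by ring⟩
  · subst hB; subst hD
    left; left; left; right
    exact ⟨C, by omega, by omega, by ring⟩
  · subst hB
    right
    exact ⟨C, D, by omega, by omega, by omega, by omega, by ring⟩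
  · subst hC; subst hD
    left; left; left; left; right
    exact ⟨B, by omega, by omega, by ring⟩
  · subst hC
    left; right
    exact ⟨B, D, by omega, by omega, by omega, by omega, by ring⟩
  · exact absurd hbc (by omega)
  · exact absurd hbc (by omega)

lemma dmq (m q s : ℕ) (hs : s < m+1) : (s + q*(m+1)) / (m+1) = q := by
  rw [Nat.add_mul_div_right _ _ (Nat.succ_pos m), Nat.div_eq_of_lt hs, Nat.zero_add]

lemma dmr (m q s : ℕ) (hs : s < m+1) : (s + q*(m+1)) % (m+1) = s := by
  rw [Nat.add_mul_mod_self_right, Nat.mod_eq_of_lt hs]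

lemma rbound (m q s : ℕ) (hq : q + 1 ≤ m) (hs : s ≤ m) : s + q*(m+1) < m*(m+1) := by
  have key := Nat.mul_le_mul hq (le_refl (m+1))
  nlinarith

lemma char_lemma (m : ℕ) (hm : 2 ≤ m) (x : ℕ) (hx : x ∈ Aset m) :
    ∃ r, r < m*(m+1) ∧ x = (max (r / (m+1)) (r % (m+1))) * (m*(m+1)) + r := by
  have hn1 : 0 < m*(m+1) := Nat.mul_pos (by omega) (by omega)
  simp only [Aset, Set.mem_union, Set.mem_singleton_iff, Set.mem_setOf_eq] at hx
  rcases hx with ((((h0 | h1) | h2) | h3) | h4) | h5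
  · exact ⟨0, hn1, by simp [h0]⟩
  · obtain ⟨i, hi1, hi2, hxe⟩ := h1
    refine ⟨i + 0*(m+1), ?_, ?_⟩
    · exact rbound m 0 i (by omega) (by omega)
    · rw [dmq m 0 i (by omega), dmr m 0 i (by omega), show max 0 i = i by omega, hxe]; ring
  · obtain ⟨i, hi1, hi2, hxe⟩ := h2
    refine ⟨0 + i*(m+1), ?_, ?_⟩
    · exact rbound m i 0 (by omega) (by omega)
    · rw [dmq m i 0 (by omega), dmr m i 0 (by omega), show max i 0 = i by omega, hxe]; ring
  · obtain ⟨i, hi1, hi2, hxe⟩ := h3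
    refine ⟨i + i*(m+1), ?_, ?_⟩
    · exact rbound m i i (by omega) (by omega)
    · rw [dmq m i i (by omega), dmr m i i (by omega), show max i i = i by omega, hxe]; ring
  · obtain ⟨i, j, hi1, hi2, hj1, hj2, hxe⟩ := h4
    refine ⟨(i+j) + j*(m+1), ?_, ?_⟩
    · exact rbound m j (i+j) (by omega) (by omega)
    · rw [dmq m j (i+j) (by omega), dmr m j (i+j) (by omega),
        show max j (i+j) = i+j by omega, hxe]; ring
  · obtain ⟨i, j, hi1, hi2, hj1, hj2, hxe⟩ := h5
    refine ⟨j + (i+j)*(m+1), ?_, ?_⟩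
    · exact rbound m (i+j) j (by omega) (by omega)
    · rw [dmq m (i+j) j (by omega), dmr m (i+j) j (by omega),
        show max (i+j) j = i+j by omega, hxe]; ring

theorem stmt13 (m : ℕ) (hm : 2 ≤ m) :
    {s : ℕ | Ars m s ∧ ¬ ∃ t : ℕ, Ars m t ∧ t + (m*(m+1)) = s} =
      {0} ∪ {x : ℕ | ∃ i, 1 ≤ i ∧ i ≤ m ∧ x = i * (m*(m+1)+1)}
        ∪ {x : ℕ | ∃ i, 1 ≤ i ∧ i ≤ m-1 ∧ x = i * ((m+1)^2)}
        ∪ {x : ℕ | ∃ i, 1 ≤ i ∧ i ≤ m-1 ∧ x = i * ((m+1)^2+1)}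
        ∪ {x : ℕ | ∃ i j, 1 ≤ i ∧ i ≤ m-1 ∧ 1 ≤ j ∧ j ≤ m - i ∧
            x = i * (m*(m+1)+1) + j * ((m+1)^2+1)}
        ∪ {x : ℕ | ∃ i j, 1 ≤ i ∧ i ≤ m-2 ∧ 1 ≤ j ∧ j ≤ (m-1) - i ∧
            x = i * ((m+1)^2) + j * ((m+1)^2+1)} := by
  have hn1 : 0 < m*(m+1) := Nat.mul_pos (by omega) (by omega)
  show _ = Aset m
  ext x
  simp only [Set.mem_setOf_eq]
  constructor
  · rintro ⟨⟨a, b, c, d, hx⟩, hnot⟩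
    obtain ⟨B, C, D, K, hNF, hEq⟩ := norm_lemma m hm _ b c d rfl
    have hx2 : x = B*(m*(m+1)+1) + C*((m+1)^2) + D*((m+1)^2+1) + (a+K)*(m*(m+1)) := by
      rw [hx]; linarith [hEq]
    rcases Nat.eq_zero_or_pos (a+K) with h0 | hpos
    · have hxb : x = B*(m*(m+1)+1) + C*((m+1)^2) + D*((m+1)^2+1) := by
        rw [hx2, h0]; ring
      rw [hxb]
      exact NF_mem m B C D hm hNF
    · exfalso
      apply hnot
      obtain ⟨E, hE⟩ : ∃ E, a + K = E + 1 := ⟨a + K - 1, by omega⟩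
      refine ⟨B*(m*(m+1)+1) + C*((m+1)^2) + D*((m+1)^2+1) + E*(m*(m+1)),
        ⟨E, B, C, D, by ring⟩, ?_⟩
      rw [hx2, hE]; ring
  · intro hx
    constructor
    · have hx' := hx
      simp only [Aset, Set.mem_union, Set.mem_singleton_iff, Set.mem_setOf_eq] at hx'
      rcases hx' with ((((h0 | h1) | h2) | h3) | h4) | h5
      · exact ⟨0, 0, 0, 0, by simp [h0]⟩
      · obtain ⟨i, _, _, hxe⟩ := h1; exact ⟨0, i, 0, 0, by rw [hxe]; ring⟩
      · obtain ⟨i, _, _, hxe⟩ := h2; exact ⟨0, 0, i, 0, by rw [hxe]; ring⟩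
      · obtain ⟨i, _, _, hxe⟩ := h3; exact ⟨0, 0, 0, i, by rw [hxe]; ring⟩
      · obtain ⟨i, j, _, _, _, _, hxe⟩ := h4; exact ⟨0, i, 0, j, by rw [hxe]; ring⟩
      · obtain ⟨i, j, _, _, _, _, hxe⟩ := h5; exact ⟨0, 0, i, j, by rw [hxe]; ring⟩
    · rintro ⟨t, ⟨a, b, c, d, ht⟩, htx⟩
      obtain ⟨B, C, D, K, hNF, hEq⟩ := norm_lemma m hm _ b c d rfl
      have hbase := NF_mem m B C D hm hNF
      have hx2 : x = (B*(m*(m+1)+1) + C*((m+1)^2) + D*((m+1)^2+1)) + (a+K+1)*(m*(m+1)) := by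
        rw [← htx, ht]; linarith [hEq]
      obtain ⟨r, hr, hxr⟩ := char_lemma m hm x hx
      obtain ⟨r', hr', hbr⟩ := char_lemma m hm _ hbase
      have hmod : r = r' := by
        have e1 : x % (m*(m+1)) = r := by
          rw [hxr, Nat.add_comm, Nat.add_mul_mod_self_right, Nat.mod_eq_of_lt hr]
        have e2 : (B*(m*(m+1)+1) + C*((m+1)^2) + D*((m+1)^2+1)) % (m*(m+1)) = r' := by
          rw [hbr, Nat.add_comm, Nat.add_mul_mod_self_right, Nat.mod_eq_of_lt hr']
        have e3 : x % (m*(m+1)) = (B*(m*(m+1)+1) + C*((m+1)^2) + D*((m+1)^2+1)) % (m*(m+1)) := by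
          rw [hx2, Nat.add_mul_mod_self_right]
        omega
      have hxb : x = B*(m*(m+1)+1) + C*((m+1)^2) + D*((m+1)^2+1) := by
        rw [hxr, hbr, hmod]
      have hP : 0 < (a+K+1)*(m*(m+1)) := Nat.mul_pos (by omega) hn1
      linarith [hx2, hxb, hP]
end

section
/- For an integer m ≥ 2, if c₂, c₃, c₄ are nonnegative integers with m·n₂ = c₂·n₂ + c₃·n₃ + c₄·n₄, where n₂ = m(m+1)+1, n₃ = (m+1)², n₄ = (m+1)²+1, then c₂ = m and c₃ = c₄ = 0. -/
theorem stmt14 (m : ℕ) (hm : 2 ≤ m) (c2 c3 c4 : ℕ)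
    (heq : m * (m*(m+1)+1) = c2 * (m*(m+1)+1) + c3 * ((m+1)^2) + c4 * ((m+1)^2+1)) :
    c2 = m ∧ c3 = 0 ∧ c4 = 0 := by
  set n2 := m*(m+1)+1 with hn2
  have key : m * n2 = (c2+c3+c4) * n2 + (c3 * m + c4 * (m+1)) := by
    rw [heq, hn2]; ring
  have hs : c2 + c3 + c4 ≤ m := by
    by_contra h
    push_neg at h
    have : (m+1) * n2 ≤ (c2+c3+c4) * n2 := Nat.mul_le_mul_right _ h
    nlinarith
  have hd : m = c2 + c3 + c4 := by
    rcases Nat.lt_or_ge (c2+c3+c4) m with h | h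
    · exfalso
      have h1 : ((c2+c3+c4)+1) * n2 ≤ m * n2 := Nat.mul_le_mul_right _ h
      have h2 : c3 + c4 ≤ m := by omega
      nlinarith
    · omega
  have hz : c3 * m + c4 * (m+1) = 0 := by nlinarith
  have : c3 = 0 ∧ c4 = 0 := by
    constructor <;> nlinarith
  obtain ⟨h3, h4⟩ := this
  subst h3; subst h4
  refine ⟨?_, rfl, rfl⟩
  omega
end

section
/- For an integer m ≥ 2 and 1 ≤ i ≤ m−1, if c₂, c₃, c₄ are nonnegative integers with i·n₂ + (m−i)·n₄ = c₂·n₂ + c₃·n₃ + c₄·n₄, where n₂ = m(m+1)+1, n₃ = (m+1)², n₄ = (m+1)²+1, then c₂ = i, c₃ = 0, and c₄ = m−i. -/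
theorem stmt15 (m : ℕ) (hm : 2 ≤ m) (i : ℕ) (hi1 : 1 ≤ i) (hi2 : i ≤ m-1)
    (c2 c3 c4 : ℕ)
    (heq : i * (m*(m+1)+1) + (m-i) * ((m+1)^2+1) = c2 * (m*(m+1)+1) + c3 * ((m+1)^2) + c4 * ((m+1)^2+1)) :
    c2 = i ∧ c3 = 0 ∧ c4 = m-i := by
  obtain ⟨k, hk⟩ : ∃ k, m = i + k := ⟨m - i, by omega⟩
  have hk1 : 1 ≤ k := by omega
  have hmi : m - i = k := by omega
  rw [hmi] at heq ⊢
  subst hk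
  clear hmi hi2 hm
  -- move to integers
  have H : (c3:ℤ) * (i+k) + (c4:ℤ) * (i+k+1) + ((c2:ℤ)+c3+c4) * (((i:ℤ)+k)*((i:ℤ)+k+1)+1)
      = (k:ℤ)*((i:ℤ)+k+1) + ((i:ℤ)+k)*(((i:ℤ)+k)*((i:ℤ)+k+1)+1) := by
    have := heq
    zify at this
    linear_combination -this
  set X : ℤ := ((i:ℤ)+k)*((i:ℤ)+k+1)+1 with hX
  have hi1' : (1:ℤ) ≤ (i:ℤ) := by exact_mod_cast hi1
  have hk1' : (1:ℤ) ≤ (k:ℤ) := by exact_mod_cast hk1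
  have hc2 : (0:ℤ) ≤ c2 := Int.ofNat_nonneg c2
  have hc3 : (0:ℤ) ≤ c3 := Int.ofNat_nonneg c3
  have hc4 : (0:ℤ) ≤ c4 := Int.ofNat_nonneg c4
  have hXk : (k:ℤ)*((i:ℤ)+k+1) + ((i:ℤ)+k+1) ≤ X := by
    rw [hX]; nlinarith
  have hX0 : (0:ℤ) ≤ X := by rw [hX]; positivity
  have hS1 : (c2:ℤ) + c3 + c4 ≤ (i:ℤ) + k := by
    by_contra h
    push_neg at h
    have h' : (i:ℤ) + k + 1 ≤ (c2:ℤ)+c3+c4 := by omega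
    have f1 : ((i:ℤ)+k+1)*X ≤ ((c2:ℤ)+c3+c4)*X := mul_le_mul_of_nonneg_right h' hX0
    have f0 : ((i:ℤ)+k+1)*X = ((i:ℤ)+k)*X + X := by ring
    have f2 : (0:ℤ) ≤ (c3:ℤ) * ((i:ℤ)+k) := by positivity
    have f3 : (0:ℤ) ≤ (c4:ℤ) * ((i:ℤ)+k+1) := by positivity
    linarith [H, hXk]
  have hS2 : (i:ℤ) + k ≤ (c2:ℤ) + c3 + c4 := by
    by_contra h
    push_neg at h
    have h' : (c2:ℤ)+c3+c4 ≤ (i:ℤ) + k - 1 := by omega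
    have f1 : ((c2:ℤ)+c3+c4)*X ≤ ((i:ℤ)+k-1)*X := mul_le_mul_of_nonneg_right h' hX0
    have f0 : ((i:ℤ)+k)*X = ((i:ℤ)+k-1)*X + X := by ring
    have f4 : (c3:ℤ)*((i:ℤ)+k) + (c4:ℤ)*((i:ℤ)+k+1) ≤ ((c3:ℤ)+c4)*((i:ℤ)+k+1) := by nlinarith [hc3]
    have f5 : ((c3:ℤ)+c4)*((i:ℤ)+k+1) ≤ ((i:ℤ)+k-1)*((i:ℤ)+k+1) := by
      apply mul_le_mul_of_nonneg_right _ (by linarith)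
      linarith
    have f6 : ((i:ℤ)+k-1)*((i:ℤ)+k+1) < (k:ℤ)*((i:ℤ)+k+1) + X := by
      rw [hX]; nlinarith
    linarith [H]
  have hS : (c2:ℤ) + c3 + c4 = (i:ℤ) + k := le_antisymm hS1 hS2
  -- linear part: c3*(i+k) + c4*(i+k+1) = k*(i+k+1)
  have h2 : (c3:ℤ) * ((i:ℤ)+k) + (c4:ℤ) * ((i:ℤ)+k+1) = (k:ℤ)*((i:ℤ)+k+1) := by
    have := H
    rw [hS] at this
    linarith
  have hpos : (0:ℤ) < (i:ℤ)+k+1 := by linarith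
  have hc4k : (c4:ℤ) ≤ k := by
    by_contra h
    push_neg at h
    have h' : (k:ℤ)+1 ≤ c4 := by omega
    have g1 : ((k:ℤ)+1)*((i:ℤ)+k+1) ≤ (c4:ℤ)*((i:ℤ)+k+1) :=
      mul_le_mul_of_nonneg_right h' (by linarith)
    have g2 : ((k:ℤ)+1)*((i:ℤ)+k+1) = (k:ℤ)*((i:ℤ)+k+1) + ((i:ℤ)+k+1) := by ring
    have g3 : (0:ℤ) ≤ (c3:ℤ) * ((i:ℤ)+k) := by positivity
    linarith [h2]
  have h3 : (c3:ℤ) * ((i:ℤ)+k) = ((k:ℤ) - c4) * ((i:ℤ)+k+1) := by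
    have g : ((k:ℤ) - c4) * ((i:ℤ)+k+1) = (k:ℤ)*((i:ℤ)+k+1) - (c4:ℤ)*((i:ℤ)+k+1) := by ring
    linarith [h2]
  have hdvd : ((i:ℤ)+k+1) ∣ (c3:ℤ) := by
    have hd : ((i:ℤ)+k+1) ∣ (c3:ℤ) * ((i:ℤ)+k) := ⟨(k:ℤ) - c4, by rw [h3]; ring⟩
    have hcop : IsCoprime ((i:ℤ)+k+1) ((i:ℤ)+k) := ⟨1, -1, by ring⟩
    exact hcop.dvd_of_dvd_mul_right hd
  have hc3z : (c3:ℤ) = 0 := by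
    rcases hdvd with ⟨t, ht⟩
    have ht0 : 0 ≤ t := by
      by_contra h
      push_neg at h
      have : ((i:ℤ)+k+1) * t < 0 := mul_neg_of_pos_of_neg hpos h
      omega
    rcases eq_or_lt_of_le ht0 with h0 | h0
    · rw [ht, ← h0]; ring
    · exfalso
      have h1t : (1:ℤ) ≤ t := h0
      have g1 : ((i:ℤ)+k+1) * 1 ≤ ((i:ℤ)+k+1) * t :=
        mul_le_mul_of_nonneg_left h1t (by linarith)
      have g2 : ((i:ℤ)+k+1) ≤ (c3:ℤ) := by rw [ht]; linarith
      have g3 : ((i:ℤ)+k+1)*((i:ℤ)+k) ≤ (c3:ℤ)*((i:ℤ)+k) :=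
        mul_le_mul_of_nonneg_right g2 (by positivity)
      have g4 : ((k:ℤ) - c4)*((i:ℤ)+k+1) ≤ (k:ℤ)*((i:ℤ)+k+1) :=
        mul_le_mul_of_nonneg_right (by linarith) (by linarith)
      have g5 : ((i:ℤ)+k+1)*((i:ℤ)+k) = (k:ℤ)*((i:ℤ)+k+1) + (i:ℤ)*((i:ℤ)+k+1) := by ring
      have g6 : (0:ℤ) < (i:ℤ)*((i:ℤ)+k+1) := by positivity
      linarith [h3]
  have hc3n : c3 = 0 := by exact_mod_cast hc3z
  subst hc3n
  have hc4nn : c4 = k := by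
    rw [hc3z, zero_mul] at h3
    rcases mul_eq_zero.mp h3.symm with h0 | h0
    · omega
    · omega
  have hc2n : c2 = i := by
    have : (c2:ℤ) = i := by rw [hc3z] at hS; omega
    exact_mod_cast this
  exact ⟨hc2n, rfl, hc4nn⟩
end

section
/- For an integer m ≥ 2, the Arslan semigroup S_m = ⟨n₁, n₂, n₃, n₄⟩ with n₁ = m(m+1), n₂ = m(m+1)+1, n₃ = (m+1)², n₄ = (m+1)²+1 satisfies: for all k ≥ 0 and 1 ≤ i ≤ m, the order of i·n₂ + k·n₁ in S_m equals i + k. -/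
theorem stmt16 (m : ℕ) (hm : 2 ≤ m) (k i : ℕ) (hi1 : 1 ≤ i) (hi2 : i ≤ m) :
    IsGreatest {n : ℕ | ∃ a b c d : ℕ, a + b + c + d = n ∧ i * (m*(m+1)+1) + k * (m*(m+1)) = a * (m*(m+1)) + b * (m*(m+1)+1) + c * ((m+1)^2) + d * ((m+1)^2+1)} (i + k) := by
  constructor
  · exact ⟨k, i, 0, 0, by ring, by ring⟩
  · rintro n ⟨a, b, c, d, hs, he⟩
    by_contra h
    push_neg at h
    nlinarith [sq_nonneg (m+1), Nat.mul_le_mul_right (m*(m+1)) h]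
end

section
/- For an integer m ≥ 2, 1 ≤ i ≤ m−1, 1 ≤ j ≤ m−i, and any k ≥ 0, the order of i·n₂ + j·n₄ + k·n₁ in the Arslan semigroup S_m equals i + j + k. -/
theorem stmt17 (m : ℕ) (hm : 2 ≤ m) (k i j : ℕ) (hi1 : 1 ≤ i) (hi2 : i ≤ m-1)
    (hj1 : 1 ≤ j) (hj2 : j ≤ m - i) :
    IsGreatest {n : ℕ | ∃ a b c d : ℕ, a + b + c + d = n ∧ i * (m*(m+1)+1) + j * ((m+1)^2+1) + k * (m*(m+1)) = a * (m*(m+1)) + b * (m*(m+1)+1) + c * ((m+1)^2) + d * ((m+1)^2+1)} (i + j + k) := by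
  constructor
  · exact ⟨k, i, 0, j, by omega, by ring⟩
  · rintro n ⟨a, b, c, d, hsum, heq⟩
    by_contra h
    have hn : i + j + k + 1 ≤ n := by omega
    obtain ⟨u, hu⟩ : ∃ u, m = i + u := ⟨m - i, by omega⟩
    have hu1 : 1 ≤ u := by omega
    have hju : j ≤ u := by omega
    have h1 : i + j * (m+2) < m*(m+1) := by
      subst hu
      nlinarith [Nat.mul_le_mul_right (i+u+2) hju, Nat.mul_le_mul_right u hi1]
    have key : (i + j + k) * (m*(m+1)) + (i + j * (m+2)) < n * (m*(m+1)) := by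
      have := Nat.mul_le_mul_right (m*(m+1)) hn
      nlinarith
    have hlow : n * (m*(m+1)) ≤
        a * (m*(m+1)) + b * (m*(m+1)+1) + c * ((m+1)^2) + d * ((m+1)^2+1) := by
      subst hsum
      have h3 : m*(m+1) ≤ (m+1)^2 := by rw [pow_two]; exact Nat.mul_le_mul_right _ (Nat.le_succ m)
      have e : (a+b+c+d) * (m*(m+1)) = a*(m*(m+1))+b*(m*(m+1))+c*(m*(m+1))+d*(m*(m+1)) := by ring
      rw [e]
      exact add_le_add (add_le_add (add_le_add le_rfl
        (Nat.mul_le_mul_left _ (Nat.le_succ _)))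
        (Nat.mul_le_mul_left _ h3))
        (Nat.mul_le_mul_left _ (le_trans h3 (Nat.le_succ _)))
    have hv : i * (m*(m+1)+1) + j * ((m+1)^2+1) + k * (m*(m+1)) =
        (i + j + k) * (m*(m+1)) + (i + j * (m+2)) := by ring
    omega
end

section
/- For an integer m ≥ 2 and the Arslan semigroup S_m, the number of elements of Ap(S_m, n₁) of order k is: 3 for k = 1; 2k+1 for 2 ≤ k ≤ m−1; and m for k = m. (Together with the single element 0 of order 0, these account for all n₁ = m(m+1) elements of the Apéry set.) -/
/-- The Apéry set of the Arslan semigroup with respect to n₁. -/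
def ArsAp (m : ℕ) : Set ℕ :=
  {s : ℕ | Ars m s ∧ ¬ ∃ t : ℕ, Ars m t ∧ t + (m*(m+1)) = s}

/-- `x` has order `k` in the Arslan semigroup: `k` is the maximal length of a
factorization of `x` into the generators. -/
def ArsOrdEq (m x k : ℕ) : Prop :=
  IsGreatest {n : ℕ | ∃ a b c d : ℕ, a + b + c + d = n ∧ x = a * (m*(m+1)) + b * (m*(m+1)+1) + c * ((m+1)^2) + d * ((m+1)^2+1)} (k)

/-- Normal form for factorizations of length `N`. -/
lemma lenIff (m x N : ℕ) :
    (∃ a b c d : ℕ, a + b + c + d = N ∧ x = a * (m*(m+1)) + b * (m*(m+1)+1) +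
      c * ((m+1)^2) + d * ((m+1)^2+1)) ↔
    ∃ t u d : ℕ, d ≤ u ∧ u ≤ t ∧ t ≤ N ∧ x = N*(m*(m+1)) + t + u*m + d := by
  constructor
  · rintro ⟨a,b,c,d,hsum,rfl⟩
    exact ⟨b+c+d, c+d, d, by omega, by omega, by omega, by rw [← hsum]; ring⟩
  · rintro ⟨t,u,d,h1,h2,h3,rfl⟩
    obtain ⟨p, rfl⟩ := Nat.exists_eq_add_of_le h3
    obtain ⟨q, rfl⟩ := Nat.exists_eq_add_of_le h2
    obtain ⟨r, rfl⟩ := Nat.exists_eq_add_of_le h1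
    exact ⟨p, q, r, d, by omega, by ring⟩

/-- Normal form for semigroup membership. -/
lemma arsIff (m x : ℕ) : Ars m x ↔
    ∃ N t u d : ℕ, d ≤ u ∧ u ≤ t ∧ t ≤ N ∧ x = N*(m*(m+1)) + t + u*m + d := by
  constructor
  · rintro ⟨a,b,c,d,rfl⟩
    obtain ⟨t,u,e,h⟩ := (lenIff m _ (a+b+c+d)).1 ⟨a,b,c,d, rfl, rfl⟩
    exact ⟨a+b+c+d, t,u,e, h⟩
  · rintro ⟨N,t,u,d,h1,h2,h3,rfl⟩
    obtain ⟨a,b,c,d,_,h⟩ := (lenIff m _ N).2 ⟨t,u,d,h1,h2,h3,rfl⟩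
    exact ⟨a,b,c,d,h⟩

/-- Core arithmetic: the candidate Apéry element minus n₁ is not in the semigroup. -/
lemma ap_not' (m K u d N t u' d' : ℕ) (hm : 2 ≤ m) (hK : K + 1 ≤ m) (hd : d ≤ u) (hu : u ≤ K+1)
    (hud : u = d ∨ u = K+1) (hv : K + 1 + u*m + d < m*(m+1))
    (hd' : d' ≤ u') (hu' : u' ≤ t) (ht' : t ≤ N)
    (heq : K * (m * (m + 1)) + (K + 1 + u * m + d) = N * (m * (m + 1)) + t + u' * m + d') :
    False := by
  have hNK : N ≤ K := by
    by_contra hlt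
    have h1 : (K+1)*(m*(m+1)) ≤ N*(m*(m+1)) := Nat.mul_le_mul (by omega) le_rfl
    nlinarith
  have hNKe : N = K := by
    by_contra hne
    have h1 : (N+1)*(m*(m+1)) ≤ K*(m*(m+1)) := Nat.mul_le_mul (by omega) le_rfl
    have h3 : u'*m ≤ N*m := Nat.mul_le_mul (by omega) le_rfl
    have h4 : (N+2)*m ≤ m*m := Nat.mul_le_mul (by omega) le_rfl
    nlinarith
  subst hNKe
  rcases hud with h | h
  · subst h
    rcases le_or_gt u' u with hcase | hcase
    · have hA : u'*m ≤ u*m := Nat.mul_le_mul hcase le_rfl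
      nlinarith
    · have hA : (u+1)*m ≤ u'*m := Nat.mul_le_mul hcase le_rfl
      nlinarith
  · subst h
    have hA : u'*m ≤ N*m := Nat.mul_le_mul (le_trans hu' ht') le_rfl
    nlinarith

/-- Core arithmetic: upper bound for factorization lengths of k·n₁ + v with v < n₁. -/
lemma ord_upper (m k v N : ℕ) (hv : v < m*(m+1))
    (h : ∃ t u d : ℕ, d ≤ u ∧ u ≤ t ∧ t ≤ N ∧ k*(m*(m+1)) + v = N*(m*(m+1)) + t + u*m + d) :
    N ≤ k := by
  obtain ⟨t,u,d,h1,h2,h3,heq⟩ := h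
  by_contra hlt
  have hA : (k+1)*(m*(m+1)) ≤ N*(m*(m+1)) := Nat.mul_le_mul (by omega) le_rfl
  nlinarith

/-- The candidate elements belong to the Apéry set and have order exactly `k`. -/
lemma mem_core (m k u d : ℕ) (hm : 2 ≤ m) (hk1 : 1 ≤ k) (hkm : k ≤ m) (hd : d ≤ u) (hu : u ≤ k)
    (hud : u = d ∨ u = k) (hv : k + u*m + d < m*(m+1)) :
    (k*(m*(m+1)) + (k + u*m + d)) ∈ ArsAp m ∧ ArsOrdEq m (k*(m*(m+1)) + (k + u*m + d)) k := by
  obtain ⟨K, rfl⟩ : ∃ K, k = K+1 := ⟨k-1, by omega⟩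
  refine ⟨⟨?_, ?_⟩, ?_, ?_⟩
  · exact (arsIff m _).2 ⟨K+1, K+1, u, d, hd, hu, le_rfl, by ring⟩
  · rintro ⟨T, hT, hTe⟩
    have h2 : ((K:ℕ)+1)*(m*(m+1)) = K*(m*(m+1)) + m*(m+1) := by ring
    have hT' : T = K*(m*(m+1)) + (K+1 + u*m + d) := by omega
    subst hT'
    obtain ⟨N,t,u',d', hd', hu', ht', heq⟩ := (arsIff m _).1 hT
    exact ap_not' m K u d N t u' d' hm hkm hd hu hud hv hd' hu' ht' heq
  · exact (lenIff m _ (K+1)).2 ⟨K+1, u, d, hd, hu, le_rfl, by ring⟩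
  · intro N hN
    obtain ⟨t,u',d', h1,h2,h3, heq⟩ := (lenIff m _ N).1 hN
    exact ord_upper m (K+1) (K+1+u*m+d) N hv ⟨t,u',d', h1,h2,h3, heq⟩

/-- Classification: every Apéry element of order `k` has the candidate shape. -/
lemma classif (m k s : ℕ) (hm : 2 ≤ m) (hk1 : 1 ≤ k) (hkm : k ≤ m)
    (hs : s ∈ ArsAp m) (ho : ArsOrdEq m s k) :
    ∃ u d : ℕ, d ≤ u ∧ u ≤ k ∧ (u = d ∨ u = k) ∧ (k = m → u < m) ∧
      s = k*(m*(m+1)) + (k + u*m + d) := by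
  obtain ⟨K, rfl⟩ : ∃ K, k = K+1 := ⟨k-1, by omega⟩
  obtain ⟨t, u, d, hd, hu, ht, hval⟩ := (lenIff m s (K+1)).1 ho.1
  obtain ⟨hsS, hsAp⟩ := hs
  -- t = K+1
  have htk : t = K+1 := by
    by_contra hne
    exact hsAp ⟨K*(m*(m+1)) + (t + u*m + d),
      (arsIff m _).2 ⟨K, t, u, d, hd, hu, by omega, by ring⟩,
      by rw [hval]; ring⟩
  subst htk
  -- u = d ∨ u = K+1
  have hud : u = d ∨ u = K+1 := by
    by_contra hne
    push_neg at hne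
    have hdu : d + 1 ≤ u := by omega
    have huk : u + 1 ≤ K + 1 := by omega
    exact hsAp ⟨K*(m*(m+1)) + (K + u*m + (d+1)),
      (arsIff m _).2 ⟨K, K, u, d+1, hdu, by omega, le_rfl, by ring⟩,
      by rw [hval]; ring⟩
  have hum : K+1 = m → u < m := by
    intro hKm
    by_contra hge
    have huem : u = m := by omega
    refine hsAp ⟨(K+1)*(m*(m+1)) + d,
      (arsIff m _).2 ⟨K+1, d, 0, 0, le_rfl, Nat.zero_le _, by omega, by ring⟩, ?_⟩
    rw [hval, huem, ← hKm]
    ring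
  exact ⟨u, d, hd, hu, hud, hum, by rw [hval]; ring⟩

lemma card_part (m k : ℕ) (hm : 2 ≤ m) (hk1 : 1 ≤ k) (hkm : k + 1 ≤ m) :
    {s : ℕ | s ∈ ArsAp m ∧ ArsOrdEq m s k}.ncard = 2*k+1 := by
  classical
  set F : Finset ℕ :=
    ((Finset.range (k+1)).image fun i => k*(m*(m+1)) + k + i*(m+1)) ∪
    ((Finset.range k).image fun j => k*(m*(m+1)) + k + k*m + j) with hF
  have hset : {s : ℕ | s ∈ ArsAp m ∧ ArsOrdEq m s k} = ↑F := by
    ext s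
    simp only [Set.mem_setOf_eq, Finset.coe_union, Set.mem_union, Finset.coe_image,
      Set.mem_image, Finset.mem_coe, Finset.mem_range, hF]
    constructor
    · rintro ⟨hAp, hOrd⟩
      obtain ⟨u, d, hd, hu, hud, _, rfl⟩ := classif m k _ hm hk1 (by omega) hAp hOrd
      rcases hud with h | h
      · exact Or.inl ⟨d, by omega, by rw [h]; ring⟩
      · by_cases hdk : d = k
        · exact Or.inl ⟨k, by omega, by rw [h, hdk]; ring⟩
        · exact Or.inr ⟨d, by omega, by rw [h]; ring⟩
    · rintro (⟨i, hi, rfl⟩ | ⟨j, hj, rfl⟩)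
      · have h1 : (i+1)*m ≤ m*m := Nat.mul_le_mul (by omega) le_rfl
        have hv : k + i*m + i < m*(m+1) := by nlinarith
        have := mem_core m k i i hm hk1 (by omega) le_rfl (by omega) (Or.inl rfl) hv
        have he : k*(m*(m+1)) + k + i*(m+1) = k*(m*(m+1)) + (k + i*m + i) := by ring
        rw [he]; exact this
      · have h1 : (k+1)*m ≤ m*m := Nat.mul_le_mul (by omega) le_rfl
        have hv : k + k*m + j < m*(m+1) := by nlinarith
        have := mem_core m k k j hm hk1 (by omega) (by omega) le_rfl (Or.inr rfl) hv
        have he : k*(m*(m+1)) + k + k*m + j = k*(m*(m+1)) + (k + k*m + j) := by ring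
        rw [he]; exact this
  rw [hset, Set.ncard_coe_finset]
  have hdisj : Disjoint ((Finset.range (k+1)).image fun i => k*(m*(m+1)) + k + i*(m+1))
      ((Finset.range k).image fun j => k*(m*(m+1)) + k + k*m + j) := by
    rw [Finset.disjoint_left]
    rintro x hx1 hx2
    obtain ⟨i, hi, rfl⟩ := Finset.mem_image.1 hx1
    obtain ⟨j, hj, he⟩ := Finset.mem_image.1 hx2
    simp only [Finset.mem_range] at hi hj
    have he2 : k*(m*(m+1)) + k + (k*m + j) = k*(m*(m+1)) + k + i*(m+1) := by
      rw [← add_assoc]; exact he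
    have he3 : k*m + j = i*(m+1) := Nat.add_left_cancel he2
    have hexp : i*(m+1) = i*m + i := by ring
    by_cases hik : i = k
    · rw [hik] at he3 hexp
      linarith
    · have h1 : (i+1)*m ≤ k*m := Nat.mul_le_mul (by omega) le_rfl
      have him : i < m := by omega
      linarith
  rw [hF, Finset.card_union_of_disjoint hdisj]
  rw [Finset.card_image_of_injective _ ?inj1, Finset.card_image_of_injective _ ?inj2,
    Finset.card_range, Finset.card_range]
  · omega
  case inj1 =>
    intro i j h
    exact Nat.eq_of_mul_eq_mul_right (by omega) (Nat.add_left_cancel h)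
  case inj2 =>
    intro i j h
    exact Nat.add_left_cancel h

lemma card_top (m : ℕ) (hm : 2 ≤ m) :
    {s : ℕ | s ∈ ArsAp m ∧ ArsOrdEq m s m}.ncard = m := by
  classical
  set F : Finset ℕ := (Finset.range m).image fun i => m*(m*(m+1)) + m + i*(m+1) with hF
  have hset : {s : ℕ | s ∈ ArsAp m ∧ ArsOrdEq m s m} = ↑F := by
    ext s
    simp only [Set.mem_setOf_eq, Finset.coe_image, Set.mem_image, Finset.mem_coe,
      Finset.mem_range, hF]
    constructor
    · rintro ⟨hAp, hOrd⟩
      obtain ⟨u, d, hd, hu, hud, hum, rfl⟩ := classif m m _ hm (by omega) le_rfl hAp hOrd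
      have hu' : u < m := hum rfl
      have hueq : u = d := by omega
      exact ⟨u, hu', by rw [← hueq]; ring⟩
    · rintro ⟨i, hi, rfl⟩
      have h1 : (i+1)*m ≤ m*m := Nat.mul_le_mul (by omega) le_rfl
      have hv : m + i*m + i < m*(m+1) := by nlinarith
      have := mem_core m m i i hm (by omega) le_rfl le_rfl (by omega) (Or.inl rfl) hv
      have he : m*(m*(m+1)) + m + i*(m+1) = m*(m*(m+1)) + (m + i*m + i) := by ring
      rw [he]; exact this
  rw [hset, Set.ncard_coe_finset, hF]
  rw [Finset.card_image_of_injective _ ?inj, Finset.card_range]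
  case inj =>
    intro i j h
    exact Nat.eq_of_mul_eq_mul_right (by omega) (Nat.add_left_cancel h)

theorem stmt18 (m : ℕ) (hm : 2 ≤ m) :
    (∀ k : ℕ, 1 ≤ k → k ≤ m-1 →
      {s : ℕ | s ∈ ArsAp m ∧ ArsOrdEq m s k}.ncard = 2*k+1) ∧
    {s : ℕ | s ∈ ArsAp m ∧ ArsOrdEq m s m}.ncard = m := by
  exact ⟨fun k hk1 hk2 => card_part m k hm hk1 (by omega), card_top m hm⟩
end

section
/- For an integer h ≥ 2 and the Bresinsky semigroup Γ_h, the number of elements of Ap(Γ_h, m₀) of order k is 2k+1 for 1 ≤ k ≤ 2h−2, and 2h−1 for k = 2h−1. (Together with the single element 0 of order 0, these account for all m₀ = 2h(2h−1) elements of the Apéry set.) -/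
/-- The Apéry set of the Bresinsky semigroup with respect to m₀. -/
def BresAp (h : ℕ) : Set ℕ :=
  {s : ℕ | Bres h s ∧ ¬ ∃ t : ℕ, Bres h t ∧ t + (2*h*(2*h-1)) = s}

/-- `x` has order `k` in the Bresinsky semigroup: `k` is the maximal length of a
factorization of `x` into the generators. -/
def BresOrdEq (h x k : ℕ) : Prop :=
  IsGreatest {n : ℕ | ∃ a b c d : ℕ, a + b + c + d = n ∧ x = a * (2*h*(2*h-1)) + b * ((2*h+1)*(2*h-1)) + c * (2*h*(2*h+1)) + d * (2*h*(2*h+1)+(2*h-1))} (k)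



/-- Value of the Apéry-set element of the Bresinsky semigroup with parameters `α ≤ n`, `β < n`
(where `n = 2h-1`). -/
def bres19val (n α β : ℕ) : ℕ := max α β * ((n+1)*n) + n*α + (2*n+2)*β

lemma bres19val_as (n α β : ℕ) : ∃ b c d : ℕ, b + c + d = max α β ∧
    bres19val n α β = b*((n+2)*n) + c*((n+1)*(n+2)) + d*((n+1)*(n+2)+n) := by
  rcases le_total α β with hle | hle
  · refine ⟨0, β - α, α, by omega, ?_⟩
    obtain ⟨e, rfl⟩ : ∃ e, β = α + e := ⟨β - α, by omega⟩
    simp only [bres19val, Nat.max_eq_right (Nat.le_add_right α e), Nat.add_sub_cancel_left]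
    ring
  · refine ⟨α - β, 0, β, by omega, ?_⟩
    obtain ⟨e, rfl⟩ : ∃ e, α = β + e := ⟨α - β, by omega⟩
    simp only [bres19val, Nat.max_eq_left (Nat.le_add_right β e), Nat.add_sub_cancel_left]
    ring

lemma bres19_mul_zero (s m c : ℕ) (h : s * m ≤ c) (hc : c < m) : s = 0 := by
  rcases Nat.eq_zero_or_pos s with h0 | h0
  · exact h0
  · have h2 : m ≤ c := le_trans (Nat.le_mul_of_pos_left m h0) h
    omega

lemma bres19_cancel (m K1 K2 R : ℕ) (hm : 0 < m) (hEq : K1*m + R = K2*m + R) : K1 = K2 :=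
  Nat.eq_of_mul_eq_mul_right hm (Nat.add_right_cancel hEq)

/-- Key decoding lemma. -/
lemma bres19_decode (n α β K A B M : ℕ) (hodd : n % 2 = 1) (hα : α ≤ n) (hβ : β < n)
    (hEq : K*((n+1)*n) + n*A + (2*n+2)*B = M*((n+1)*n) + n*α + (2*n+2)*β) :
    ∃ s t : ℕ, A = α + s*(n+1) ∧ B = β + t*n ∧ K + s + 2*t = M := by
  have hn1 : 0 < n := by omega
  have hA : A ≡ α [MOD n+1] := by
    apply (ZMod.natCast_eq_natCast_iff _ _ _).mp
    have hc := congrArg (fun x : ℕ => (x : ZMod (n+1))) hEq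
    push_cast at hc
    have hz : ((n : ℕ) : ZMod (n+1)) = -1 := by
      have h0 : ((n+1 : ℕ) : ZMod (n+1)) = 0 := ZMod.natCast_self (n+1)
      push_cast at h0
      linear_combination h0
    rw [hz] at hc
    linear_combination -hc
  have hB : B ≡ β [MOD n] := by
    have h2 : 2*B ≡ 2*β [MOD n] := by
      apply (ZMod.natCast_eq_natCast_iff _ _ _).mp
      have hc := congrArg (fun x : ℕ => (x : ZMod n)) hEq
      push_cast at hc ⊢
      rw [ZMod.natCast_self n] at hc
      linear_combination hc
    exact Nat.ModEq.cancel_left_of_coprime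
      ((Nat.prime_two.coprime_iff_not_dvd.mpr (by omega)).symm) h2
  have hAm : A % (n+1) = α := by
    have h1 : A % (n+1) = α % (n+1) := hA
    rw [h1, Nat.mod_eq_of_lt (by omega)]
  have hBm : B % n = β := by
    have h1 : B % n = β % n := hB
    rw [h1, Nat.mod_eq_of_lt (by omega)]
  obtain ⟨q1, hq1⟩ : ∃ q, A = α + q*(n+1) := by
    refine ⟨A/(n+1), ?_⟩
    calc A = A % (n+1) + A/(n+1)*(n+1) := (Nat.mod_add_div' A (n+1)).symm
    _ = α + A/(n+1)*(n+1) := by rw [hAm]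
  obtain ⟨q2, hq2⟩ : ∃ q, B = β + q*n := by
    refine ⟨B/n, ?_⟩
    calc B = B % n + B/n*n := (Nat.mod_add_div' B n).symm
    _ = β + B/n*n := by rw [hBm]
  refine ⟨q1, q2, hq1, hq2, ?_⟩
  have hre : (K + q1 + 2*q2) * ((n+1)*n) + (n*α + (2*n+2)*β)
      = M*((n+1)*n) + (n*α + (2*n+2)*β) := by
    rw [← add_assoc, ← add_assoc, ← hEq, hq1, hq2]; ring
  exact bres19_cancel _ _ _ _ (by positivity) hre

lemma bres19_gen (h n : ℕ) (e1 : 2*h = n+1) :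
    2*h*(2*h-1) = (n+1)*n ∧ (2*h+1)*(2*h-1) = (n+2)*n ∧ 2*h*(2*h+1) = (n+1)*(n+2) ∧
      2*h*(2*h+1)+(2*h-1) = (n+1)*(n+2)+n := by
  have e0 : 2*h-1 = n := by omega
  have e2 : 2*h+1 = n+2 := by omega
  rw [e0, e2, e1]
  exact ⟨rfl, rfl, rfl, rfl⟩

lemma bres19_iff (h n x : ℕ) (e1 : 2*h = n+1) :
    Bres h x ↔ ∃ a b c d : ℕ,
      x = a*((n+1)*n) + b*((n+2)*n) + c*((n+1)*(n+2)) + d*((n+1)*(n+2)+n) := by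
  obtain ⟨g0, g1, g2, g3⟩ := bres19_gen h n e1
  unfold Bres
  rw [g3, g1, g0, g2]

lemma bres19_Ap (h n α β : ℕ) (e1 : 2*h = n+1) (hh : 2 ≤ h) (hα : α ≤ n) (hβ : β < n) :
    bres19val n α β ∈ BresAp h := by
  obtain ⟨g0, g1, g2, g3⟩ := bres19_gen h n e1
  have hodd : n % 2 = 1 := by omega
  obtain ⟨b', c', d', hsum', hv'⟩ := bres19val_as n α β
  constructor
  · rw [bres19_iff h n _ e1]
    exact ⟨0, b', c', d', by rw [hv']; ring⟩
  · rintro ⟨t, htB, hteq⟩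
    rw [bres19_iff h n _ e1] at htB
    obtain ⟨a, b, c, d, rfl⟩ := htB
    rw [g0] at hteq
    have hEq : (a+b+c+d+1)*((n+1)*n) + n*(b+d) + (2*n+2)*(c+d)
        = max α β * ((n+1)*n) + n*α + (2*n+2)*β := by
      rw [show (a+b+c+d+1)*((n+1)*n) + n*(b+d) + (2*n+2)*(c+d)
          = a*((n+1)*n) + b*((n+2)*n) + c*((n+1)*(n+2)) + d*((n+1)*(n+2)+n) + (n+1)*n
          from by ring, hteq]
      simp only [bres19val]
    obtain ⟨s, t', h1, h2, h3⟩ := bres19_decode n α β _ _ _ _ hodd hα hβ hEq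
    have hA : α ≤ b+d := by rw [h1]; exact Nat.le_add_right _ _
    have hB : β ≤ c+d := by rw [h2]; exact Nat.le_add_right _ _
    have hM : max α β ≤ b+c+d := max_le (by omega) (by omega)
    omega

lemma bres19_ord (h n α β : ℕ) (e1 : 2*h = n+1) (hh : 2 ≤ h) (hα : α ≤ n) (hβ : β < n) :
    BresOrdEq h (bres19val n α β) (max α β) := by
  obtain ⟨g0, g1, g2, g3⟩ := bres19_gen h n e1
  have hodd : n % 2 = 1 := by omega
  obtain ⟨b', c', d', hsum', hv'⟩ := bres19val_as n α β
  constructor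
  · exact ⟨0, b', c', d', by omega, by rw [g3, g1, g0, g2, hv']; ring⟩
  · rintro N ⟨a, b, c, d, hsum, hv⟩
    rw [g3, g1, g0, g2] at hv
    have hEq : (a+b+c+d)*((n+1)*n) + n*(b+d) + (2*n+2)*(c+d)
        = max α β * ((n+1)*n) + n*α + (2*n+2)*β := by
      rw [show (a+b+c+d)*((n+1)*n) + n*(b+d) + (2*n+2)*(c+d)
          = a*((n+1)*n) + b*((n+2)*n) + c*((n+1)*(n+2)) + d*((n+1)*(n+2)+n)
          from by ring, ← hv]
      simp only [bres19val]
    obtain ⟨s, t', _, _, h3⟩ := bres19_decode n α β _ _ _ _ hodd hα hβ hEq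
    omega

lemma bres19_complete (h n s : ℕ) (e1 : 2*h = n+1) (hh : 2 ≤ h) (hs : s ∈ BresAp h) :
    ∃ α β, α ≤ n ∧ β < n ∧ s = bres19val n α β := by
  obtain ⟨g0, g1, g2, g3⟩ := bres19_gen h n e1
  obtain ⟨hsB, hnot⟩ := hs
  rw [bres19_iff h n s e1] at hsB
  obtain ⟨a, b, c, d, rfl⟩ := hsB
  obtain ⟨q1, α, hα, hA⟩ : ∃ q r, r < n+1 ∧ b+d = r + q*(n+1) :=
    ⟨(b+d)/(n+1), (b+d)%(n+1), Nat.mod_lt _ (by omega), (Nat.mod_add_div' (b+d) (n+1)).symm⟩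
  obtain ⟨q2, β, hβ, hB⟩ : ∃ q r, r < n ∧ c+d = r + q*n :=
    ⟨(c+d)/n, (c+d)%n, Nat.mod_lt _ (by omega), (Nat.mod_add_div' (c+d) n).symm⟩
  have hsval : a*((n+1)*n) + b*((n+2)*n) + c*((n+1)*(n+2)) + d*((n+1)*(n+2)+n)
      = (a+b+c+d+q1+2*q2)*((n+1)*n) + (n*α + (2*n+2)*β) := by
    rw [show a*((n+1)*n) + b*((n+2)*n) + c*((n+1)*(n+2)) + d*((n+1)*(n+2)+n)
        = (a+b+c+d)*((n+1)*n) + n*(b+d) + (2*n+2)*(c+d) from by ring, hA, hB]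
    ring
  set W := a+b+c+d+q1+2*q2 with hW
  have hbv : bres19val n α β = max α β * ((n+1)*n) + (n*α + (2*n+2)*β) := by
    simp only [bres19val]; ring
  refine ⟨α, β, by omega, hβ, ?_⟩
  rcases lt_trichotomy W (max α β) with hlt | heq | hgt
  · -- contradicts bres19val ∈ BresAp
    exfalso
    obtain ⟨u, hu⟩ : ∃ u, max α β = W + u + 1 := ⟨max α β - W - 1, by omega⟩
    have hAp := (bres19_Ap h n α β e1 hh (by omega) hβ).2
    apply hAp
    refine ⟨(W+u)*((n+1)*n) + (n*α + (2*n+2)*β), ?_, ?_⟩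
    · rw [bres19_iff h n _ e1]
      refine ⟨a+u, b, c, d, ?_⟩
      rw [show (a+u)*((n+1)*n) + b*((n+2)*n) + c*((n+1)*(n+2)) + d*((n+1)*(n+2)+n)
          = (a*((n+1)*n) + b*((n+2)*n) + c*((n+1)*(n+2)) + d*((n+1)*(n+2)+n)) + u*((n+1)*n)
          from by ring, hsval]
      ring
    · rw [g0, hbv, hu]; ring
  · rw [hsval, heq, ← hbv]
  · -- contradicts s ∈ BresAp
    exfalso
    obtain ⟨u, hu⟩ : ∃ u, W = max α β + u + 1 := ⟨W - max α β - 1, by omega⟩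
    apply hnot
    obtain ⟨b', c', d', hsum', hv'⟩ := bres19val_as n α β
    refine ⟨(max α β + u)*((n+1)*n) + (n*α + (2*n+2)*β), ?_, ?_⟩
    · rw [bres19_iff h n _ e1]
      refine ⟨u, b', c', d', ?_⟩
      have hx : max α β * ((n+1)*n) + (n*α + (2*n+2)*β)
          = b'*((n+2)*n) + c'*((n+1)*(n+2)) + d'*((n+1)*(n+2)+n) := by
        rw [← hbv, hv']
      rw [show (max α β + u)*((n+1)*n) + (n*α + (2*n+2)*β)
          = u*((n+1)*n) + (max α β * ((n+1)*n) + (n*α + (2*n+2)*β)) from by ring, hx]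
      ring
    · rw [g0, hsval, hu]; ring

theorem stmt19 (h : ℕ) (hh : 2 ≤ h) :
    (∀ k : ℕ, 1 ≤ k → k ≤ 2*h-2 →
      {s : ℕ | s ∈ BresAp h ∧ BresOrdEq h s k}.ncard = 2*k+1) ∧
    {s : ℕ | s ∈ BresAp h ∧ BresOrdEq h s (2*h-1)}.ncard = 2*h-1 := by
  obtain ⟨n, e1⟩ : ∃ n, 2*h = n+1 := ⟨2*h-1, by omega⟩
  have hn3 : 3 ≤ n := by omega
  have hodd : n % 2 = 1 := by omega
  have hset : ∀ k, {s : ℕ | s ∈ BresAp h ∧ BresOrdEq h s k} =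
      (fun p : ℕ×ℕ => bres19val n p.1 p.2) '' {p : ℕ×ℕ | p.1 ≤ n ∧ p.2 < n ∧ max p.1 p.2 = k} := by
    intro k
    ext s
    simp only [Set.mem_setOf_eq, Set.mem_image]
    constructor
    · rintro ⟨hAp, hOrd⟩
      obtain ⟨α, β, hα, hβ, rfl⟩ := bres19_complete h n _ e1 hh hAp
      exact ⟨(α, β), ⟨hα, hβ, (bres19_ord h n α β e1 hh hα hβ).unique hOrd⟩, rfl⟩
    · rintro ⟨⟨α, β⟩, ⟨hα, hβ, hmax⟩, rfl⟩
      exact ⟨bres19_Ap h n α β e1 hh hα hβ, hmax ▸ bres19_ord h n α β e1 hh hα hβ⟩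
  have hinj : ∀ k, Set.InjOn (fun p : ℕ×ℕ => bres19val n p.1 p.2)
      {p : ℕ×ℕ | p.1 ≤ n ∧ p.2 < n ∧ max p.1 p.2 = k} := by
    intro k
    rintro ⟨a, b⟩ ⟨ha1, hb1, _⟩ ⟨a', b'⟩ ⟨ha1', hb1', _⟩ hfe
    simp only [bres19val] at hfe
    obtain ⟨s, t, h1, h2, _⟩ := bres19_decode n a b (max a' b') a' b' (max a b) hodd ha1 hb1
      hfe.symm
    have hs : s = 0 := bres19_mul_zero s (n+1) a'
      (by rw [h1]; exact Nat.le_add_left _ _) (by omega)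
    have ht : t = 0 := bres19_mul_zero t n b'
      (by rw [h2]; exact Nat.le_add_left _ _) (by omega)
    subst hs; subst ht
    simp only [Nat.zero_mul, Nat.add_zero] at h1 h2
    exact Prod.ext h1.symm h2.symm
  constructor
  · intro k hk1 hk2
    have hkn : k < n := by omega
    rw [hset k, Set.ncard_image_of_injOn (hinj k)]
    have hP : {p : ℕ×ℕ | p.1 ≤ n ∧ p.2 < n ∧ max p.1 p.2 = k} =
        ↑(((Finset.range (k+1)) ×ˢ (Finset.range (k+1))) \
          ((Finset.range k) ×ˢ (Finset.range k))) := by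
      ext ⟨a, b⟩
      simp only [Set.mem_setOf_eq, Finset.coe_sdiff, Set.mem_diff, Finset.coe_product,
        Set.mem_prod, Finset.mem_coe, Finset.mem_range, not_and]
      omega
    rw [hP, Set.ncard_coe_finset,
      Finset.card_sdiff_of_subset (Finset.product_subset_product
        (Finset.range_subset_range.mpr (by omega)) (Finset.range_subset_range.mpr (by omega))),
      Finset.card_product, Finset.card_product, Finset.card_range, Finset.card_range]
    have : (k+1)*(k+1) = k*k + (2*k+1) := by ring
    omega
  · have hkn : 2*h-1 = n := by omega
    rw [hkn, hset n, Set.ncard_image_of_injOn (hinj n)]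
    have hP : {p : ℕ×ℕ | p.1 ≤ n ∧ p.2 < n ∧ max p.1 p.2 = n} =
        ↑(({n} : Finset ℕ) ×ˢ (Finset.range n)) := by
      ext ⟨a, b⟩
      simp only [Set.mem_setOf_eq, Finset.coe_product, Set.mem_prod, Finset.mem_coe,
        Finset.mem_singleton, Finset.mem_range]
      omega
    rw [hP, Set.ncard_coe_finset, Finset.card_product, Finset.card_singleton,
      Finset.card_range]
    omega
end
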